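/- arXiv:2305.07294 — 3 statements merged into one kernel-verified Lean document; each statement's English description precedes it below -/
import Mathlib

section
/- Let F be a tileable edge-ordered graph and let v ∈ V(F) be a vertex incident to the smallest edge of F. Let F′ be the edge-ordered graph obtained from F by adding a new vertex v′ and the edge vv′, placed smaller than all edges of F in the edge order. Then F′ is tileable. -/
/-- An *edge-ordered graph*: a simple graph together with a real labeling of
pairs of vertices that is injective on the edge set (hence inducing a linear
order of the edges). -/
structure EdgeOrderedGraph (V : Type*) where
  graph : SimpleGraph V
  label : Sym2 V → ℝ
  inj : ∀ e₁ ∈ graph.edgeSet, ∀ e₂ ∈ graph.edgeSet, label e₁ = label e₂ → e₁ = e₂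

namespace EdgeOrderedGraph

/-- `φ` realizes a copy of the edge-ordered graph `F` inside `G`. -/
def IsCopy {W V : Type*} (F : EdgeOrderedGraph W) (G : EdgeOrderedGraph V) (φ : W → V) : Prop :=
  Function.Injective φ ∧
    (∀ a b : W, F.graph.Adj a b → G.graph.Adj (φ a) (φ b)) ∧
    (∀ a b c d : W, F.graph.Adj a b → F.graph.Adj c d →
      F.label s(a, b) < F.label s(c, d) → G.label s(φ a, φ b) < G.label s(φ c, φ d))

/-- `G` contains a copy of `F`. -/
def ContainsCopy {W V : Type*} (G : EdgeOrderedGraph V) (F : EdgeOrderedGraph W) : Prop :=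
  ∃ φ : W → V, IsCopy F G φ

/-- `G` has a collection of vertex-disjoint copies of `F` covering exactly `S`. -/
def HasPerfectTilingOn {W V : Type*} (F : EdgeOrderedGraph W) (G : EdgeOrderedGraph V)
    (S : Set V) : Prop :=
  ∃ T : Set (W → V),
    (∀ φ ∈ T, IsCopy F G φ) ∧
    (∀ φ ∈ T, ∀ w : W, φ w ∈ S) ∧
    ∀ v ∈ S, ∃! p : (W → V) × W, p.1 ∈ T ∧ p.1 p.2 = v

/-- `G` has a perfect `F`-tiling. -/
def HasPerfectTiling {W V : Type*} (F : EdgeOrderedGraph W) (G : EdgeOrderedGraph V) : Prop :=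
  HasPerfectTilingOn F G Set.univ

/-- `F` is Turánable: some complete graph contains a copy of `F` under every edge-ordering. -/
def Turanable {W : Type*} (F : EdgeOrderedGraph W) : Prop :=
  ∃ t : ℕ, ∀ G : EdgeOrderedGraph (Fin t), G.graph = ⊤ → G.ContainsCopy F

/-- `F` is tileable: some complete graph `K_t` with `|F| ∣ t` has a perfect `F`-tiling
under every edge-ordering. -/
def Tileable {W : Type*} [Fintype W] (F : EdgeOrderedGraph W) : Prop :=
  ∃ t : ℕ, 0 < t ∧ Fintype.card W ∣ t ∧
    ∀ G : EdgeOrderedGraph (Fin t), G.graph = ⊤ → HasPerfectTiling F G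

/-- The degree of a vertex in an edge-ordered graph. -/
noncomputable def degree {V : Type*} (G : EdgeOrderedGraph V) (v : V) : ℕ :=
  (G.graph.neighborSet v).ncard

end EdgeOrderedGraph

open EdgeOrderedGraph

/-- The monotone path `P_k^≤` with `k` edges: consecutive edges increase. -/
noncomputable def monotonePath (k : ℕ) : EdgeOrderedGraph (Fin (k + 1)) where
  graph := SimpleGraph.fromRel (fun a b => a.val + 1 = b.val)
  label := Sym2.lift ⟨fun a b => ((min a.val b.val : ℕ) : ℝ), fun a b => by simp [min_comm]⟩
  inj := by
    intro e₁ h₁ e₂ h₂ heq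
    induction e₁ using Sym2.ind with
    | _ a b =>
    induction e₂ using Sym2.ind with
    | _ c d =>
    rw [SimpleGraph.mem_edgeSet, SimpleGraph.fromRel_adj] at h₁ h₂
    simp only [Sym2.lift_mk] at heq
    have hm : min a.val b.val = min c.val d.val := Nat.cast_injective heq
    have hab : a.val ≠ b.val := fun h => h₁.1 (Fin.val_injective h)
    have hcd : c.val ≠ d.val := fun h => h₂.1 (Fin.val_injective h)
    have key : (a.val = c.val ∧ b.val = d.val) ∨ (a.val = d.val ∧ b.val = c.val) := by
      have h12 := h₁.2; have h22 := h₂.2; omega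
    rw [Sym2.eq_iff]
    rcases key with ⟨x, y⟩ | ⟨x, y⟩
    · exact Or.inl ⟨Fin.val_injective x, Fin.val_injective y⟩
    · exact Or.inr ⟨Fin.val_injective x, Fin.val_injective y⟩


set_option linter.unusedSectionVars false
set_option linter.unusedVariables false

open Finset

section Ramsey

variable {C : Type*} [Fintype C] [Nonempty C]

/-- `H` is homogeneous for the coloring `col` of `r`-subsets. -/
def RHomog {α : Type} [LinearOrder α] (r : ℕ) (col : Finset α → C) (H : Finset α) : Prop :=
  ∀ A ⊆ H, A.card = r → ∀ B ⊆ H, B.card = r → col A = col B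

theorem ramsey_chain (r : ℕ)
    (IH : ∀ n : ℕ, ∃ M : ℕ, ∀ {α : Type} [LinearOrder α] (col : Finset α → C) (S : Finset α),
      M ≤ S.card → ∃ H, H ⊆ S ∧ n ≤ H.card ∧ RHomog r col H) :
    ∀ L : ℕ, ∃ M : ℕ, ∀ {α : Type} [LinearOrder α] (col : Finset α → C) (S : Finset α),
      M ≤ S.card →
      ∃ (H : Finset α) (κ : α → C), H ⊆ S ∧ H.card = L ∧
        ∀ A, A ⊆ H → A.card = r + 1 → ∀ hA : A.Nonempty, col A = κ (A.min' hA) := by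
  intro L
  induction L with
  | zero =>
    refine ⟨0, fun {α} _ col S _ => ⟨∅, fun _ => Classical.arbitrary C, empty_subset _, card_empty, ?_⟩⟩
    intro A hA hcard hne
    rw [Finset.subset_empty.mp hA] at hcard
    simp at hcard
  | succ L ihL =>
    classical
    obtain ⟨ML, hML⟩ := ihL
    obtain ⟨Mr, hMr⟩ := IH ML
    refine ⟨Mr + 1, fun {α} _ col S hS => ?_⟩
    have hSne : S.Nonempty := card_pos.mp (by omega)
    set x := S.min' hSne with hx
    have hxS : x ∈ S := S.min'_mem hSne
    have hcard' : Mr ≤ (S.erase x).card := by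
      rw [card_erase_of_mem hxS]; omega
    obtain ⟨H₁, hH₁sub, hH₁card, hH₁hom⟩ := hMr (fun A => col (insert x A)) (S.erase x) hcard'
    obtain ⟨H₂, κ, hH₂sub, hH₂card, hκ⟩ := hML col H₁ hH₁card
    set κx : C := if h : r ≤ H₂.card then
        col (insert x (H₂.exists_subset_card_eq h).choose) else Classical.arbitrary C with hκxdef
    have hxH₂ : x ∉ H₂ := fun hxx => (Finset.notMem_erase x S) (hH₁sub (hH₂sub hxx))
    refine ⟨insert x H₂, fun y => if y = x then κx else κ y, ?_, ?_, ?_⟩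
    · intro y hy
      rcases Finset.mem_insert.mp hy with rfl | hy
      · exact hxS
      · exact (Finset.erase_subset _ _) (hH₁sub (hH₂sub hy))
    · rw [Finset.card_insert_of_notMem hxH₂, hH₂card]
    · intro A hA hAcard hAne
      by_cases hxA : x ∈ A
      · have hmin : A.min' hAne = x := by
          apply le_antisymm (Finset.min'_le A x hxA)
          apply Finset.le_min'
          intro y hy
          have hyS : y ∈ S := by
            rcases Finset.mem_insert.mp (hA hy) with rfl | h
            · exact hxS
            · exact (Finset.erase_subset _ _) (hH₁sub (hH₂sub h))
          exact Finset.min'_le S y hyS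
        have hsub : A.erase x ⊆ H₂ := by
          intro y hy
          rcases Finset.mem_insert.mp (hA (Finset.mem_of_mem_erase hy)) with rfl | h
          · exact absurd rfl (Finset.ne_of_mem_erase hy)
          · exact h
        have hce : (A.erase x).card = r := by
          rw [Finset.card_erase_of_mem hxA, hAcard]; omega
        have hrle : r ≤ H₂.card := hce ▸ Finset.card_le_card hsub
        have hW := (H₂.exists_subset_card_eq hrle).choose_spec
        have h2 : col (insert x (A.erase x)) = col (insert x (H₂.exists_subset_card_eq hrle).choose) :=
          hH₁hom (A.erase x) (hsub.trans hH₂sub) hce _ (hW.1.trans hH₂sub) hW.2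
        have h1 : col A = col (insert x (A.erase x)) := by rw [Finset.insert_erase hxA]
        rw [hmin]
        show col A = if x = x then κx else κ x
        rw [if_pos rfl, hκxdef, dif_pos hrle, h1, h2]
      · have hsub : A ⊆ H₂ := fun y hy =>
          (Finset.mem_insert.mp (hA hy)).resolve_left (by rintro rfl; exact hxA hy)
        have hminne : A.min' hAne ≠ x := fun h => hxA (h ▸ A.min'_mem hAne)
        show col A = if A.min' hAne = x then κx else κ (A.min' hAne)
        rw [if_neg hminne]
        exact hκ A hsub hAcard hAne

theorem my_ramsey (r : ℕ) :
    ∀ n : ℕ, ∃ M : ℕ, ∀ {α : Type} [LinearOrder α] (col : Finset α → C) (S : Finset α),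
      M ≤ S.card → ∃ H, H ⊆ S ∧ n ≤ H.card ∧ RHomog r col H := by
  induction r with
  | zero =>
    intro n
    refine ⟨n, fun {α} _ col S hS => ?_⟩
    obtain ⟨H, hHS, hHcard⟩ := S.exists_subset_card_eq hS
    refine ⟨H, hHS, hHcard.ge, ?_⟩
    intro A _ hA B _ hB
    rw [Finset.card_eq_zero.mp hA, Finset.card_eq_zero.mp hB]
  | succ r IH =>
    intro n
    obtain ⟨M, hM⟩ := ramsey_chain r IH (Fintype.card C * n + 1)
    refine ⟨M, fun {α} _ col S hS => ?_⟩
    obtain ⟨H, κ, hHS, hHcard, hκ⟩ := hM col S hS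
    classical
    have hlt : (Finset.univ : Finset C).card * n < H.card := by
      rw [hHcard, Finset.card_univ]; omega
    obtain ⟨c₀, _, hc₀⟩ := Finset.exists_lt_card_fiber_of_mul_lt_card_of_maps_to
      (fun a _ => Finset.mem_univ (κ a)) hlt
    refine ⟨H.filter (fun y => κ y = c₀), (Finset.filter_subset _ _).trans hHS, le_of_lt hc₀, ?_⟩
    intro A hA hAcard B hB hBcard
    have hAne : A.Nonempty := Finset.card_pos.mp (by omega)
    have hBne : B.Nonempty := Finset.card_pos.mp (by omega)
    have hA' := hκ A (hA.trans (Finset.filter_subset _ _)) hAcard hAne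
    have hB' := hκ B (hB.trans (Finset.filter_subset _ _)) hBcard hBne
    have h1 : κ (A.min' hAne) = c₀ := (Finset.mem_filter.mp (hA (A.min'_mem hAne))).2
    have h2 : κ (B.min' hBne) = c₀ := (Finset.mem_filter.mp (hB (B.min'_mem hBne))).2
    rw [hA', hB', h1, h2]

end Ramsey
section Part1

open EdgeOrderedGraph Finset

variable {W : Type} [Fintype W]
variable {N : ℕ}

/-- label of a pair of vertices of `Fin N` -/
noncomputable def lbl (G : EdgeOrderedGraph (Fin N)) (a b : Fin N) : ℝ := G.label s(a, b)

variable (G : EdgeOrderedGraph (Fin N))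

lemma lbl_comm (a b : Fin N) : lbl G a b = lbl G b a := by
  unfold lbl; rw [Sym2.eq_swap]

lemma mem_top_edgeSet (hG : G.graph = ⊤) {a b : Fin N} (hab : a ≠ b) :
    s(a, b) ∈ G.graph.edgeSet := by
  rw [hG]; simpa using hab

lemma lbl_inj (hG : G.graph = ⊤) {a b c d : Fin N} (hab : a ≠ b) (hcd : c ≠ d)
    (h : lbl G a b = lbl G c d) : s(a, b) = s(c, d) :=
  G.inj _ (mem_top_edgeSet G hG hab) _ (mem_top_edgeSet G hG hcd) h

lemma lbl_ne (hG : G.graph = ⊤) {a b c d : Fin N} (hab : a ≠ b) (hcd : c ≠ d)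
    (hne : s(a, b) ≠ s(c, d)) : lbl G a b ≠ lbl G c d :=
  fun h => hne (lbl_inj G hG hab hcd h)

/-- if the edges are distinct, labels are strictly comparable both ways -/
lemma lbl_lt_or (hG : G.graph = ⊤) {a b c d : Fin N} (hab : a ≠ b) (hcd : c ≠ d)
    (hne : s(a, b) ≠ s(c, d)) : lbl G a b < lbl G c d ∨ lbl G c d < lbl G a b :=
  lt_or_gt_of_ne (lbl_ne G hG hab hcd hne)

variable (F : EdgeOrderedGraph W) (v u : W) (F' : EdgeOrderedGraph (Option W))

lemma Fmin_strict (hvu : F.graph.Adj v u)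
    (hsmallest : ∀ e ∈ F.graph.edgeSet, F.label s(v, u) ≤ F.label e)
    {a b : W} (h : F.graph.Adj a b) (hne : s(a, b) ≠ s(v, u)) :
    F.label s(v, u) < F.label s(a, b) := by
  refine lt_of_le_of_ne (hsmallest _ ((SimpleGraph.mem_edgeSet _).mpr h)) (fun heq => hne ?_)
  exact (F.inj _ ((SimpleGraph.mem_edgeSet _).mpr hvu) _ ((SimpleGraph.mem_edgeSet _).mpr h) heq).symm

lemma copy_min (hG : G.graph = ⊤) (hvu : F.graph.Adj v u)
    (hsmallest : ∀ e ∈ F.graph.edgeSet, F.label s(v, u) ≤ F.label e)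
    {ψ : W → Fin N} (hψ : IsCopy F G ψ) {a b : W} (h : F.graph.Adj a b) :
    lbl G (ψ v) (ψ u) ≤ lbl G (ψ a) (ψ b) := by
  by_cases heq : s(a, b) = s(v, u)
  · rcases Sym2.eq_iff.mp heq with ⟨rfl, rfl⟩ | ⟨rfl, rfl⟩
    · exact le_refl _
    · exact le_of_eq (lbl_comm G _ _)
  · exact le_of_lt (hψ.2.2 v u a b hvu h (Fmin_strict F v u hvu hsmallest h heq))

lemma F'_adj_cases (hpend : ∀ w : W, F'.graph.Adj none (some w) ↔ w = v)
    (hadj : ∀ a b : W, F'.graph.Adj (some a) (some b) ↔ F.graph.Adj a b)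
    {x y : Option W} (h : F'.graph.Adj x y) :
    (∃ a b : W, x = some a ∧ y = some b ∧ F.graph.Adj a b) ∨
      (x = none ∧ y = some v) ∨ (x = some v ∧ y = none) := by
  match x, y with
  | none, none => exact absurd rfl h.ne
  | none, some w => exact Or.inr (Or.inl ⟨rfl, by rw [(hpend w).mp h]⟩)
  | some w, none => exact Or.inr (Or.inr ⟨by rw [(hpend w).mp h.symm], rfl⟩)
  | some a, some b => exact Or.inl ⟨a, b, rfl, rfl, (hadj a b).mp h⟩

/-- The fundamental construction: an `F`-copy plus a suitable pendant vertex is an `F'`-copy. -/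
lemma pendant_copy (hG : G.graph = ⊤) (hvu : F.graph.Adj v u)
    (hsmallest : ∀ e ∈ F.graph.edgeSet, F.label s(v, u) ≤ F.label e)
    (hadj : ∀ a b : W, F'.graph.Adj (some a) (some b) ↔ F.graph.Adj a b)
    (hpend : ∀ w : W, F'.graph.Adj none (some w) ↔ w = v)
    (horder : ∀ a b c d : W, F.graph.Adj a b → F.graph.Adj c d →
      (F'.label s(some a, some b) < F'.label s(some c, some d) ↔
        F.label s(a, b) < F.label s(c, d)))
    (hnew : ∀ a b : W, F.graph.Adj a b →
      F'.label s(none, some v) < F'.label s(some a, some b))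
    {ψ : W → Fin N} (hψ : IsCopy F G ψ) {b : Fin N}
    (hb : ∀ w, ψ w ≠ b)
    (hlt : lbl G b (ψ v) < lbl G (ψ v) (ψ u)) :
    IsCopy F' G (fun o => match o with | none => b | some w => ψ w) := by
  set φ : Option W → Fin N := fun o => match o with | none => b | some w => ψ w with hφ
  have hinj : Function.Injective φ := by
    intro o₁ o₂ heq
    match o₁, o₂ with
    | none, none => rfl
    | some w₁, some w₂ => exact congrArg some (hψ.1 heq)
    | none, some w₂ => exact absurd heq.symm (hb w₂)
    | some w₁, none => exact absurd heq (hb w₁)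
  -- key: pendant edge is below every copy edge in G
  have hkey : ∀ a' b' : W, F.graph.Adj a' b' → lbl G b (ψ v) < lbl G (ψ a') (ψ b') :=
    fun a' b' h => lt_of_lt_of_le hlt (copy_min G F v u hG hvu hsmallest hψ h)
  refine ⟨hinj, ?_, ?_⟩
  · intro a' b' h
    rw [hG, SimpleGraph.top_adj]
    exact fun heq => h.ne (hinj heq)
  · intro a' b' c' d' h₁ h₂ hlt'
    have hswapF' : (s(some v, none) : Sym2 (Option W)) = s(none, some v) := Sym2.eq_swap
    rcases F'_adj_cases F v F' hpend hadj h₁ with ⟨a₀, b₀, rfl, rfl, ha⟩ | ⟨rfl, rfl⟩ | ⟨rfl, rfl⟩ <;>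
      rcases F'_adj_cases F v F' hpend hadj h₂ with ⟨c₀, d₀, rfl, rfl, hc⟩ | ⟨rfl, rfl⟩ | ⟨rfl, rfl⟩
    · exact hψ.2.2 a₀ b₀ c₀ d₀ ha hc ((horder a₀ b₀ c₀ d₀ ha hc).mp hlt')
    · exact absurd hlt' (lt_asymm (hnew a₀ b₀ ha))
    · rw [hswapF'] at hlt'; exact absurd hlt' (lt_asymm (hnew a₀ b₀ ha))
    · exact hkey c₀ d₀ hc
    · exact absurd hlt' (lt_irrefl _)
    · rw [hswapF'] at hlt'; exact absurd hlt' (lt_irrefl _)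
    · have h := hkey c₀ d₀ hc
      rw [lbl_comm] at h
      exact h
    · rw [hswapF'] at hlt'; exact absurd hlt' (lt_irrefl _)
    · exact absurd hlt' (lt_irrefl _)

end Part1
section Part2

open EdgeOrderedGraph Finset

variable {W : Type} [Fintype W] {N : ℕ}
variable (F' : EdgeOrderedGraph (Option W)) (G : EdgeOrderedGraph (Fin N))

/-- a perfect `F'`-tiling of the (finite) vertex set `A` -/
def PTf (A : Finset (Fin N)) : Prop := HasPerfectTilingOn F' G (↑A)

lemma PTf_empty : PTf F' G ∅ := by
  refine ⟨∅, ?_, ?_, ?_⟩ <;> simp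

lemma PTf_single {φ : Option W → Fin N} (hφ : IsCopy F' G φ) {A : Finset (Fin N)}
    (hA : ∀ x, x ∈ A ↔ ∃ o, φ o = x) : PTf F' G A := by
  refine ⟨{φ}, ?_, ?_, ?_⟩
  · rintro ψ hψ
    rw [Set.mem_singleton_iff] at hψ
    subst hψ; exact hφ
  · rintro ψ hψ w
    rw [Set.mem_singleton_iff] at hψ
    subst hψ
    exact Finset.mem_coe.mpr ((hA _).mpr ⟨w, rfl⟩)
  · intro x hx
    obtain ⟨o, ho⟩ := (hA x).mp (Finset.mem_coe.mp hx)
    refine ⟨(φ, o), ⟨rfl, ho⟩, ?_⟩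
    rintro ⟨ψ, w⟩ ⟨hψ, hw⟩
    rw [Set.mem_singleton_iff] at hψ
    subst hψ
    have : w = o := hφ.1 (by rw [hw, ho])
    rw [this]

lemma PTf_union {A B : Finset (Fin N)} (hd : Disjoint A B)
    (hA : PTf F' G A) (hB : PTf F' G B) : PTf F' G (A ∪ B) := by
  obtain ⟨TA, hTA1, hTA2, hTA3⟩ := hA
  obtain ⟨TB, hTB1, hTB2, hTB3⟩ := hB
  refine ⟨TA ∪ TB, ?_, ?_, ?_⟩
  · rintro ψ (h | h)
    · exact hTA1 ψ h
    · exact hTB1 ψ h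
  · rintro ψ (h | h) w
    · exact Finset.mem_coe.mpr (Finset.mem_union_left _ (Finset.mem_coe.mp (hTA2 ψ h w)))
    · exact Finset.mem_coe.mpr (Finset.mem_union_right _ (Finset.mem_coe.mp (hTB2 ψ h w)))
  · intro x hx
    rcases Finset.mem_union.mp (Finset.mem_coe.mp hx) with hxA | hxB
    · obtain ⟨p, ⟨hp1, hp2⟩, hpu⟩ := hTA3 x (Finset.mem_coe.mpr hxA)
      refine ⟨p, ⟨Or.inl hp1, hp2⟩, ?_⟩
      rintro ⟨ψ, w⟩ ⟨hψ | hψ, hw⟩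
      · exact hpu (ψ, w) ⟨hψ, hw⟩
      · exact absurd hxA (Finset.disjoint_right.mp hd (Finset.mem_coe.mp (hw ▸ hTB2 ψ hψ w)))
    · obtain ⟨p, ⟨hp1, hp2⟩, hpu⟩ := hTB3 x (Finset.mem_coe.mpr hxB)
      refine ⟨p, ⟨Or.inr hp1, hp2⟩, ?_⟩
      rintro ⟨ψ, w⟩ ⟨hψ | hψ, hw⟩
      · exact absurd hxB (Finset.disjoint_left.mp hd (Finset.mem_coe.mp (hw ▸ hTA2 ψ hψ w)))
      · exact hpu (ψ, w) ⟨hψ, hw⟩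

variable (F : EdgeOrderedGraph W)

/-- From the tiling hypothesis, extract a copy of `F` inside any `t`-subset `S`, passing
through any designated vertex `s₀` of `S`. -/
lemma copy_through (hG : G.graph = ⊤) {t : ℕ}
    (htile : ∀ Gt : EdgeOrderedGraph (Fin t), Gt.graph = ⊤ → HasPerfectTiling F Gt)
    (S : Finset (Fin N)) (hS : S.card = t) (s₀ : Fin N) (hs₀ : s₀ ∈ S) :
    ∃ (ψ : W → Fin N) (w₀ : W), IsCopy F G ψ ∧ (∀ w, ψ w ∈ S) ∧ ψ w₀ = s₀ := by
  set e := S.orderIsoOfFin hS with he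
  set emb : Fin t → Fin N := fun i => ↑(e i) with hemb
  have hembInj : Function.Injective emb := fun i j h => e.injective (Subtype.ext h)
  have hembMem : ∀ i, emb i ∈ S := fun i => (e i).2
  have hinj2 : ∀ e₁ ∈ (⊤ : SimpleGraph (Fin t)).edgeSet, ∀ e₂ ∈ (⊤ : SimpleGraph (Fin t)).edgeSet,
      G.label (e₁.map emb) = G.label (e₂.map emb) → e₁ = e₂ := by
    intro e₁ h₁ e₂ h₂ heq
    induction e₁ using Sym2.ind with | _ a b =>
    induction e₂ using Sym2.ind with | _ c d =>
    rw [SimpleGraph.mem_edgeSet, SimpleGraph.top_adj] at h₁ h₂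
    rw [Sym2.map_pair_eq, Sym2.map_pair_eq] at heq
    have hkey := lbl_inj G hG (fun h => h₁ (hembInj h)) (fun h => h₂ (hembInj h)) heq
    rw [Sym2.eq_iff] at hkey ⊢
    rcases hkey with ⟨h1, h2⟩ | ⟨h1, h2⟩
    · exact Or.inl ⟨hembInj h1, hembInj h2⟩
    · exact Or.inr ⟨hembInj h1, hembInj h2⟩
  obtain ⟨T, hT1, _, hT3⟩ := htile ⟨⊤, fun ee => G.label (ee.map emb), hinj2⟩ rfl
  obtain ⟨⟨φ, w₀⟩, ⟨hφT, hw₀⟩, _⟩ := hT3 (e.symm ⟨s₀, hs₀⟩) (Set.mem_univ _)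
  have hφc := hT1 φ hφT
  refine ⟨fun w => emb (φ w), w₀, ⟨?_, ?_, ?_⟩, fun w => hembMem (φ w), ?_⟩
  · exact hembInj.comp hφc.1
  · intro a b h
    rw [hG, SimpleGraph.top_adj]
    exact fun heq => h.ne (hφc.1 (hembInj heq))
  · intro a b c d ha hc hlt
    have h2 := hφc.2.2 a b c d ha hc hlt
    show G.label s(emb (φ a), emb (φ b)) < G.label s(emb (φ c), emb (φ d))
    rw [← Sym2.map_pair_eq, ← Sym2.map_pair_eq]
    exact h2
  · have hw₀' : φ w₀ = e.symm ⟨s₀, hs₀⟩ := hw₀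
    show emb (φ w₀) = s₀
    rw [hw₀']
    show (↑(e (e.symm ⟨s₀, hs₀⟩)) : Fin N) = s₀
    rw [e.apply_symm_apply]

end Part2
section Part3

open EdgeOrderedGraph Finset

variable {W : Type} [Fintype W] {N : ℕ}
variable (G : EdgeOrderedGraph (Fin N))

lemma RHomog.subset {α : Type} [LinearOrder α] {C : Type*} [Fintype C] [Nonempty C]
    {r : ℕ} {col : Finset α → C} {H H' : Finset α} (h : RHomog r col H) (hsub : H' ⊆ H) :
    RHomog r col H' :=
  fun A hA cA B hB cB => h A (hA.trans hsub) cA B (hB.trans hsub) cB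

lemma pair_not_mem {a b c : Fin N} (hab : a < b) (hbc : b < c) :
    a ∉ ({b, c} : Finset (Fin N)) := by
  simp only [Finset.mem_insert, Finset.mem_singleton]
  push_neg
  exact ⟨hab.ne, (hab.trans hbc).ne⟩

lemma card_pair {a b : Fin N} (h : a < b) : ({a, b} : Finset (Fin N)).card = 2 := by
  rw [Finset.card_insert_of_notMem (by simp [h.ne]), Finset.card_singleton]

lemma card_triple {a b c : Fin N} (hab : a < b) (hbc : b < c) :
    ({a, b, c} : Finset (Fin N)).card = 3 := by
  rw [Finset.card_insert_of_notMem (pair_not_mem hab hbc),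
    Finset.card_insert_of_notMem (by simp [hbc.ne]), Finset.card_singleton]

lemma sort_pair {a b : Fin N} (h : a < b) :
    ({a, b} : Finset (Fin N)).sort (· ≤ ·) = [a, b] := by
  rw [show ({a, b} : Finset (Fin N)) = insert a {b} from rfl,
    Finset.sort_insert (· ≤ ·) (fun x hx => ?_) (by simp [h.ne]), Finset.sort_singleton]
  rw [Finset.mem_singleton] at hx
  subst hx; exact le_of_lt h

lemma sort_triple {a b c : Fin N} (hab : a < b) (hbc : b < c) :
    ({a, b, c} : Finset (Fin N)).sort (· ≤ ·) = [a, b, c] := by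
  rw [show ({a, b, c} : Finset (Fin N)) = insert a {b, c} from rfl,
    Finset.sort_insert (· ≤ ·) (fun x hx => ?_) (pair_not_mem hab hbc), sort_pair hbc]
  rcases Finset.mem_insert.mp hx with rfl | hx
  · exact le_of_lt hab
  · rw [Finset.mem_singleton] at hx
    subst hx; exact le_of_lt (hab.trans hbc)

/-- pattern data of a 3-element subset: the two comparisons needed for pendant search -/
noncomputable def col3 : Finset (Fin N) → Prop × Prop := fun A =>
  match A.sort (· ≤ ·) with
  | [x, y, z] => (lbl G x z < lbl G y z, lbl G x y < lbl G x z)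
  | _ => (False, False)

lemma col3_eval {a b c : Fin N} (hab : a < b) (hbc : b < c) :
    col3 G {a, b, c} = (lbl G a c < lbl G b c, lbl G a b < lbl G a c) := by
  simp only [col3, sort_triple hab hbc]

/-- pointed pattern data of a pair, relative to an external vertex `d` -/
noncomputable def colP (d : Fin N) : Finset (Fin N) → Prop × Prop × Prop := fun A =>
  match A.sort (· ≤ ·) with
  | [x, y] => (lbl G d y < lbl G x y, lbl G d x < lbl G x y, lbl G d x < lbl G d y)
  | _ => (False, False, False)

lemma colP_eval (d : Fin N) {a b : Fin N} (hab : a < b) :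
    colP G d {a, b} = (lbl G d b < lbl G a b, lbl G d a < lbl G a b, lbl G d a < lbl G d b) := by
  simp only [colP, sort_pair hab]

/-- full pattern of a `k`-element subset -/
noncomputable def colF (k : ℕ) (A : Finset (Fin N)) : Fin k → Fin k → Fin k → Fin k → Prop :=
  if h : A.card = k then
    fun p q r s => lbl G (A.orderEmbOfFin h p) (A.orderEmbOfFin h q) <
      lbl G (A.orderEmbOfFin h r) (A.orderEmbOfFin h s)
  else fun _ _ _ _ => False

lemma colF_eval {k : ℕ} {A : Finset (Fin N)} (hA : A.card = k) (p q r s : Fin k) :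
    colF G k A p q r s ↔ lbl G (A.orderEmbOfFin hA p) (A.orderEmbOfFin hA q) <
      lbl G (A.orderEmbOfFin hA r) (A.orderEmbOfFin hA s) := by
  unfold colF
  rw [dif_pos hA]

lemma orderEmb_symm_apply {k : ℕ} {A : Finset (Fin N)} (hA : A.card = k) {x : Fin N}
    (hx : x ∈ A) : A.orderEmbOfFin hA ((A.orderIsoOfFin hA).symm ⟨x, hx⟩) = x := by
  rw [← Finset.coe_orderIsoOfFin_apply, OrderIso.apply_symm_apply]

/-- transport along pattern equality -/
lemma transport_map {k : ℕ} {A B : Finset (Fin N)} (hA : A.card = k) (hB : B.card = k)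
    (hcol : colF G k A = colF G k B) :
    ∃ g : Fin N → Fin N, (∀ x ∈ A, g x ∈ B) ∧
      (∀ x ∈ A, ∀ y ∈ A, g x = g y → x = y) ∧ (Finset.image g A = B) ∧
      (∀ a ∈ A, ∀ b ∈ A, ∀ c ∈ A, ∀ d ∈ A,
        (lbl G a b < lbl G c d ↔ lbl G (g a) (g b) < lbl G (g c) (g d))) := by
  classical
  set g : Fin N → Fin N := fun x =>
    if hx : x ∈ A then B.orderEmbOfFin hB ((A.orderIsoOfFin hA).symm ⟨x, hx⟩) else x with hg
  have hgx : ∀ x (hx : x ∈ A), g x = B.orderEmbOfFin hB ((A.orderIsoOfFin hA).symm ⟨x, hx⟩) :=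
    fun x hx => dif_pos hx
  have hmem : ∀ x ∈ A, g x ∈ B := by
    intro x hx
    rw [hgx x hx]
    exact Finset.orderEmbOfFin_mem B hB _
  have hinj : ∀ x ∈ A, ∀ y ∈ A, g x = g y → x = y := by
    intro x hx y hy h
    rw [hgx x hx, hgx y hy] at h
    have h2 := (B.orderEmbOfFin hB).injective h
    have h3 := (A.orderIsoOfFin hA).symm.injective h2
    exact congrArg Subtype.val h3
  have hiff : ∀ a ∈ A, ∀ b ∈ A, ∀ c ∈ A, ∀ d ∈ A,
      (lbl G a b < lbl G c d ↔ lbl G (g a) (g b) < lbl G (g c) (g d)) := by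
    intro a ha b hb c hc d hd
    have h1 := colF_eval G hA ((A.orderIsoOfFin hA).symm ⟨a, ha⟩) ((A.orderIsoOfFin hA).symm ⟨b, hb⟩)
      ((A.orderIsoOfFin hA).symm ⟨c, hc⟩) ((A.orderIsoOfFin hA).symm ⟨d, hd⟩)
    have h2 := colF_eval G hB ((A.orderIsoOfFin hA).symm ⟨a, ha⟩) ((A.orderIsoOfFin hA).symm ⟨b, hb⟩)
      ((A.orderIsoOfFin hA).symm ⟨c, hc⟩) ((A.orderIsoOfFin hA).symm ⟨d, hd⟩)
    rw [orderEmb_symm_apply hA ha, orderEmb_symm_apply hA hb, orderEmb_symm_apply hA hc,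
      orderEmb_symm_apply hA hd] at h1
    rw [← hgx a ha, ← hgx b hb, ← hgx c hc, ← hgx d hd] at h2
    rw [← h1, ← h2, hcol]
  have himage : Finset.image g A = B := by
    apply Finset.eq_of_subset_of_card_le
    · intro y hy
      obtain ⟨x, hx, rfl⟩ := Finset.mem_image.mp hy
      exact hmem x hx
    · rw [Finset.card_image_of_injOn (fun x hx y hy h => hinj x hx y hy h), hA, hB]
  exact ⟨g, hmem, hinj, himage, hiff⟩

/-- A spread set: `q` elements of `R` such that below, between and above each pair
there are elements of `R` outside the set. -/
lemma spread_chain (R : Finset (Fin N)) (q : ℕ) (hR : 2 * q + 2 ≤ R.card) :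
    ∃ S : Finset (Fin N), S ⊆ R ∧ S.card = q ∧
      (∀ z ∈ S, ∃ b ∈ R, b ∉ S ∧ b < z) ∧
      (∀ z ∈ S, ∀ y ∈ S, z < y → ∃ b ∈ R, b ∉ S ∧ z < b ∧ b < y) ∧
      (∀ z ∈ S, ∃ b ∈ R, b ∉ S ∧ z < b) := by
  classical
  obtain ⟨cs, hcsR, hcs⟩ := R.exists_subset_card_eq hR
  set em := cs.orderEmbOfFin hcs with hem
  have hmemR : ∀ i, em i ∈ R := fun i => hcsR (Finset.orderEmbOfFin_mem cs hcs i)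
  have hlt : ∀ i j : Fin (2 * q + 2), i < j ↔ em i < em j := fun i j =>
    ⟨fun h => em.strictMono h, fun h => by
      by_contra hc
      push_neg at hc
      rcases eq_or_lt_of_le hc with rfl | h2
      · exact lt_irrefl _ h
      · exact lt_asymm h (em.strictMono h2)⟩
  set S := Finset.image (fun i : Fin q => em ⟨2 * (i : ℕ) + 1, by omega⟩) Finset.univ with hS
  have hmemS : ∀ x, x ∈ S ↔ ∃ i : Fin q, em ⟨2 * (i : ℕ) + 1, by omega⟩ = x := by
    intro x
    rw [hS, Finset.mem_image]
    constructor
    · rintro ⟨i, _, h⟩; exact ⟨i, h⟩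
    · rintro ⟨i, h⟩; exact ⟨i, Finset.mem_univ i, h⟩
  have hSR : S ⊆ R := by
    intro x hx
    obtain ⟨i, rfl⟩ := (hmemS x).mp hx
    exact hmemR _
  have hScard : S.card = q := by
    rw [hS, Finset.card_image_of_injective _ (fun i j h => by
      have := em.injective h
      have h2 : 2 * (i : ℕ) + 1 = 2 * (j : ℕ) + 1 := congrArg Fin.val this
      exact Fin.ext (by omega)), Finset.card_univ, Fintype.card_fin]
  have hnotS : ∀ (m : ℕ) (hm : m < 2 * q + 2), m % 2 = 0 → em ⟨m, hm⟩ ∉ S := by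
    intro m hm hpar hmem
    obtain ⟨i, hi⟩ := (hmemS _).mp hmem
    have := congrArg Fin.val (em.injective hi)
    simp only at this
    omega
  refine ⟨S, hSR, hScard, ?_, ?_, ?_⟩
  · intro z hz
    obtain ⟨i, rfl⟩ := (hmemS z).mp hz
    refine ⟨em ⟨2 * (i : ℕ), by omega⟩, hmemR _, hnotS _ _ (by omega), ?_⟩
    rw [← hlt]
    exact Fin.mk_lt_mk.mpr (by omega)
  · intro z hz y hy hzy
    obtain ⟨i, rfl⟩ := (hmemS z).mp hz
    obtain ⟨j, rfl⟩ := (hmemS y).mp hy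
    have hij : (i : ℕ) < (j : ℕ) := by
      have := (hlt _ _).mpr hzy
      rw [Fin.mk_lt_mk] at this
      omega
    refine ⟨em ⟨2 * (i : ℕ) + 2, by omega⟩, hmemR _, hnotS _ _ (by omega), ?_, ?_⟩
    · rw [← hlt]; exact Fin.mk_lt_mk.mpr (by omega)
    · rw [← hlt]; exact Fin.mk_lt_mk.mpr (by omega)
  · intro z hz
    obtain ⟨i, rfl⟩ := (hmemS z).mp hz
    refine ⟨em ⟨2 * (i : ℕ) + 2, by omega⟩, hmemR _, hnotS _ _ (by omega), ?_⟩
    rw [← hlt]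
    exact Fin.mk_lt_mk.mpr (by omega)

end Part3
section Part4

open EdgeOrderedGraph Finset

variable {W : Type} [Fintype W] {N : ℕ}
variable (G : EdgeOrderedGraph (Fin N))

lemma triple_subset {a b c : Fin N} {R : Finset (Fin N)} (ha : a ∈ R) (hb : b ∈ R)
    (hc : c ∈ R) : ({a, b, c} : Finset (Fin N)) ⊆ R := by
  intro x hx
  rcases Finset.mem_insert.mp hx with rfl | hx
  · exact ha
  rcases Finset.mem_insert.mp hx with rfl | hx
  · exact hb
  rw [Finset.mem_singleton] at hx; subst hx; exact hc

lemma pair_subset {a b : Fin N} {R : Finset (Fin N)} (ha : a ∈ R) (hb : b ∈ R) :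
    ({a, b} : Finset (Fin N)) ⊆ R := by
  intro x hx
  rcases Finset.mem_insert.mp hx with rfl | hx
  · exact ha
  rw [Finset.mem_singleton] at hx; subst hx; exact hb

lemma sym2_ne {b y z : Fin N} (h1 : b ≠ z) (h2 : b ≠ y) : s(b, y) ≠ s(z, y) := by
  intro h
  rcases Sym2.eq_iff.mp h with ⟨h3, -⟩ | ⟨h3, -⟩
  · exact h1 h3
  · exact h2 h3

lemma sym2_ne_left {y b z : Fin N} (h1 : b ≠ z) (h2 : y ≠ z) : s(y, b) ≠ s(y, z) := by
  intro h
  rcases Sym2.eq_iff.mp h with ⟨-, h3⟩ | ⟨h3, -⟩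
  · exact h1 h3
  · exact h2 h3

lemma hom3_top {R : Finset (Fin N)} (h3 : RHomog 3 (col3 G) R) {a b c a' b' c' : Fin N}
    (ha : a ∈ R) (hb : b ∈ R) (hc : c ∈ R) (ha' : a' ∈ R) (hb' : b' ∈ R) (hc' : c' ∈ R)
    (hab : a < b) (hbc : b < c) (hab' : a' < b') (hbc' : b' < c') :
    (lbl G a c < lbl G b c ↔ lbl G a' c' < lbl G b' c') := by
  have h := h3 {a, b, c} (triple_subset ha hb hc) (card_triple hab hbc)
    {a', b', c'} (triple_subset ha' hb' hc') (card_triple hab' hbc')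
  rw [col3_eval G hab hbc, col3_eval G hab' hbc'] at h
  exact iff_of_eq (congrArg Prod.fst h)

lemma hom3_bot {R : Finset (Fin N)} (h3 : RHomog 3 (col3 G) R) {a b c a' b' c' : Fin N}
    (ha : a ∈ R) (hb : b ∈ R) (hc : c ∈ R) (ha' : a' ∈ R) (hb' : b' ∈ R) (hc' : c' ∈ R)
    (hab : a < b) (hbc : b < c) (hab' : a' < b') (hbc' : b' < c') :
    (lbl G a b < lbl G a c ↔ lbl G a' b' < lbl G a' c') := by
  have h := h3 {a, b, c} (triple_subset ha hb hc) (card_triple hab hbc)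
    {a', b', c'} (triple_subset ha' hb' hc') (card_triple hab' hbc')
  rw [col3_eval G hab hbc, col3_eval G hab' hbc'] at h
  exact iff_of_eq (congrArg Prod.snd h)

/-- pendant search inside a homogeneous set -/
lemma bsearch (hG : G.graph = ⊤) {R S : Finset (Fin N)} (h3 : RHomog 3 (col3 G) R)
    (hSR : S ⊆ R)
    (gapb : ∀ z ∈ S, ∃ b ∈ R, b ∉ S ∧ b < z)
    (gapm : ∀ z ∈ S, ∀ y ∈ S, z < y → ∃ b ∈ R, b ∉ S ∧ z < b ∧ b < y)
    (gapa : ∀ z ∈ S, ∃ b ∈ R, b ∉ S ∧ z < b)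
    {y z : Fin N} (hy : y ∈ S) (hz : z ∈ S) (hyz : y ≠ z) :
    ∃ b ∈ R, b ∉ S ∧ lbl G b y < lbl G z y := by
  have hyR := hSR hy
  have hzR := hSR hz
  rcases lt_or_gt_of_ne hyz with hlt | hlt
  · -- y < z : shared bottom vertex y
    obtain ⟨b₂, hb₂R, hb₂S, hb₂l, hb₂r⟩ := gapm y hy z hz hlt
    by_cases hQ : lbl G y b₂ < lbl G y z
    · exact ⟨b₂, hb₂R, hb₂S, by rw [lbl_comm G b₂ y, lbl_comm G z y]; exact hQ⟩
    · obtain ⟨b₃, hb₃R, hb₃S, hb₃l⟩ := gapa z hz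
      refine ⟨b₃, hb₃R, hb₃S, ?_⟩
      have hiff := hom3_bot G h3 hyR hb₂R hzR hyR hzR hb₃R hb₂l hb₂r hlt hb₃l
      have hne : lbl G y b₃ ≠ lbl G y z :=
        lbl_ne G hG (hlt.trans hb₃l).ne hlt.ne (sym2_ne_left hb₃l.ne' hlt.ne)
      rw [lbl_comm G b₃ y, lbl_comm G z y]
      rcases lt_or_gt_of_ne hne with h | h
      · exact h
      · exact absurd (hiff.mpr h) hQ
  · -- z < y : shared top vertex y
    obtain ⟨b₁, hb₁R, hb₁S, hb₁l⟩ := gapb z hz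
    by_cases hP : lbl G b₁ y < lbl G z y
    · exact ⟨b₁, hb₁R, hb₁S, hP⟩
    · obtain ⟨b₂, hb₂R, hb₂S, hb₂l, hb₂r⟩ := gapm z hz y hy hlt
      refine ⟨b₂, hb₂R, hb₂S, ?_⟩
      have hiff := hom3_top G h3 hb₁R hzR hyR hzR hb₂R hyR hb₁l hlt hb₂l hb₂r
      have hne : lbl G b₂ y ≠ lbl G z y :=
        lbl_ne G hG hb₂r.ne hlt.ne (sym2_ne hb₂l.ne' hb₂r.ne)
      rcases lt_or_gt_of_ne hne with h | h
      · exact h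
      · exact absurd (hiff.mpr h) hP

end Part4

/-- All the fixed data of the problem. -/
structure Ctx (W : Type) [Fintype W] where
  F : EdgeOrderedGraph W
  v : W
  u : W
  F' : EdgeOrderedGraph (Option W)
  t : ℕ
  hvu : F.graph.Adj v u
  hsmallest : ∀ e ∈ F.graph.edgeSet, F.label s(v, u) ≤ F.label e
  hadj : ∀ a b : W, F'.graph.Adj (some a) (some b) ↔ F.graph.Adj a b
  hpend : ∀ w : W, F'.graph.Adj none (some w) ↔ w = v
  horder : ∀ a b c d : W, F.graph.Adj a b → F.graph.Adj c d →
      (F'.label s(some a, some b) < F'.label s(some c, some d) ↔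
        F.label s(a, b) < F.label s(c, d))
  hnew : ∀ a b : W, F.graph.Adj a b → F'.label s(none, some v) < F'.label s(some a, some b)
  ht0 : 0 < t
  htf : Fintype.card W ∣ t
  htile : ∀ Gt : EdgeOrderedGraph (Fin t), Gt.graph = ⊤ → EdgeOrderedGraph.HasPerfectTiling F Gt

section Part4b

open EdgeOrderedGraph Finset

variable {W : Type} [Fintype W] {N : ℕ}
variable (P : Ctx W) (G : EdgeOrderedGraph (Fin N))

lemma Ctx.tle : Fintype.card W ≤ P.t := Nat.le_of_dvd P.ht0 P.htf

/-- package: a copy plus a valid pendant gives a tiled block -/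
lemma Ctx.pend_PTf (hG : G.graph = ⊤) {ψ : W → Fin N} (hψ : IsCopy P.F G ψ) {b : Fin N}
    (hb : ∀ w, ψ w ≠ b) (hlt : lbl G b (ψ P.v) < lbl G (ψ P.v) (ψ P.u)) :
    ∃ X : Finset (Fin N), PTf P.F' G X ∧ X.card = Fintype.card W + 1 ∧ b ∈ X ∧
      ∀ x, x ∈ X ↔ (x = b ∨ ∃ w, ψ w = x) := by
  have hφ' : IsCopy P.F' G (fun o : Option W => match o with | none => b | some w => ψ w) :=
    pendant_copy G P.F P.v P.u P.F' hG P.hvu P.hsmallest P.hadj P.hpend P.horder P.hnew hψ hb hlt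
  set φ' : Option W → Fin N := fun o => match o with | none => b | some w => ψ w with hφ'def
  have hmemX : ∀ x, x ∈ Finset.image φ' Finset.univ ↔ ∃ o, φ' o = x := by
    intro x
    rw [Finset.mem_image]
    exact ⟨fun ⟨o, _, h⟩ => ⟨o, h⟩, fun ⟨o, h⟩ => ⟨o, Finset.mem_univ o, h⟩⟩
  refine ⟨Finset.image φ' Finset.univ, PTf_single P.F' G hφ' hmemX, ?_, ?_, ?_⟩
  · rw [Finset.card_image_of_injective _ hφ'.1, Finset.card_univ, Fintype.card_option]
  · exact (hmemX b).mpr ⟨none, rfl⟩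
  · intro x
    rw [hmemX x]
    constructor
    · rintro ⟨o, rfl⟩
      match o with
      | none => exact Or.inl rfl
      | some w => exact Or.inr ⟨w, rfl⟩
    · rintro (rfl | ⟨w, rfl⟩)
      · exact ⟨none, rfl⟩
      · exact ⟨some w, rfl⟩

/-- every `(f+1)`-subset of a homogeneous set carries a tiled block -/
lemma Ctx.blocks (hG : G.graph = ⊤) {R : Finset (Fin N)} (h3 : RHomog 3 (col3 G) R)
    (hF : RHomog (Fintype.card W + 1) (colF G (Fintype.card W + 1)) R)
    (hRcard : 2 * P.t + 2 ≤ R.card) :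
    ∀ X ⊆ R, X.card = Fintype.card W + 1 → PTf P.F' G X := by
  obtain ⟨S, hSR, hScard, gapb, gapm, gapa⟩ := spread_chain R P.t hRcard
  have hSne : S.Nonempty := by rw [← Finset.card_pos, hScard]; exact P.ht0
  obtain ⟨s₀, hs₀⟩ := hSne
  obtain ⟨ψ, w₀, hψ, hψS, -⟩ := copy_through G P.F hG P.htile S hScard s₀ hs₀
  have hyz : ψ P.v ≠ ψ P.u := fun h => P.hvu.ne (hψ.1 h)
  obtain ⟨b, hbR, hbS, hblt⟩ := bsearch G hG h3 hSR gapb gapm gapa (hψS P.v) (hψS P.u) hyz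
  have hbψ : ∀ w, ψ w ≠ b := fun w h => hbS (h ▸ hψS w)
  have hblt' : lbl G b (ψ P.v) < lbl G (ψ P.v) (ψ P.u) := by
    rw [lbl_comm G (ψ P.v) (ψ P.u)]; exact hblt
  have hφ' : IsCopy P.F' G (fun o : Option W => match o with | none => b | some w => ψ w) :=
    pendant_copy G P.F P.v P.u P.F' hG P.hvu P.hsmallest P.hadj P.hpend P.horder P.hnew
      hψ hbψ hblt'
  set φ' : Option W → Fin N := fun o => match o with | none => b | some w => ψ w with hφ'def
  have hmemX₀ : ∀ x, x ∈ Finset.image φ' Finset.univ ↔ ∃ o, φ' o = x := by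
    intro x
    rw [Finset.mem_image]
    exact ⟨fun ⟨o, _, h⟩ => ⟨o, h⟩, fun ⟨o, h⟩ => ⟨o, Finset.mem_univ o, h⟩⟩
  set X₀ := Finset.image φ' Finset.univ with hX₀def
  have hX₀card : X₀.card = Fintype.card W + 1 := by
    rw [hX₀def, Finset.card_image_of_injective _ hφ'.1, Finset.card_univ, Fintype.card_option]
  have hX₀R : X₀ ⊆ R := by
    intro x hx
    obtain ⟨o, rfl⟩ := (hmemX₀ x).mp hx
    match o with
    | none => exact hbR
    | some w => exact hSR (hψS w)
  intro X hXR hXcard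
  have hcol := hF X₀ hX₀R hX₀card X hXR hXcard
  obtain ⟨g, hgmem, hginj, hgim, hgiff⟩ := transport_map G hX₀card hXcard hcol
  have hmem' : ∀ o, φ' o ∈ X₀ := fun o => (hmemX₀ _).mpr ⟨o, rfl⟩
  have hφ'' : IsCopy P.F' G (fun o => g (φ' o)) := by
    refine ⟨?_, ?_, ?_⟩
    · intro o₁ o₂ h
      exact hφ'.1 (hginj _ (hmem' o₁) _ (hmem' o₂) h)
    · intro a b' hadj'
      rw [hG, SimpleGraph.top_adj]
      intro h
      exact hadj'.ne (hφ'.1 (hginj _ (hmem' a) _ (hmem' b') h))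
    · intro a b' c d ha hc hlt2
      exact (hgiff _ (hmem' a) _ (hmem' b') _ (hmem' c) _ (hmem' d)).mp
        (hφ'.2.2 a b' c d ha hc hlt2)
  apply PTf_single P.F' G hφ''
  intro x
  rw [← hgim]
  constructor
  · intro hx
    obtain ⟨x₀, hx₀, rfl⟩ := Finset.mem_image.mp hx
    obtain ⟨o, rfl⟩ := (hmemX₀ x₀).mp hx₀
    exact ⟨o, rfl⟩
  · rintro ⟨o, rfl⟩
    exact Finset.mem_image_of_mem g (hmem' o)

end Part4b
section Part5

open EdgeOrderedGraph Finset

variable {W : Type} [Fintype W]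

/-- Absorption step: any vertex `d` can be put into a tiled block together with `f`
vertices of a large enough subset of a homogeneous set. The bound is uniform in `N`, `G`. -/
lemma Ctx.absorb_step (P : Ctx W) :
    ∃ M : ℕ, ∀ {N : ℕ} (G : EdgeOrderedGraph (Fin N)), G.graph = ⊤ →
      ∀ {R : Finset (Fin N)}, RHomog 3 (col3 G) R →
      ∀ Rc : Finset (Fin N), Rc ⊆ R → M ≤ Rc.card →
      ∀ d : Fin N, d ∉ Rc →
      ∃ X : Finset (Fin N), PTf P.F' G X ∧ d ∈ X ∧ X.card = Fintype.card W + 1 ∧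
        X.erase d ⊆ Rc := by
  obtain ⟨M, hM⟩ := my_ramsey (C := Prop × Prop × Prop) 2 (3 * P.t + 4)
  refine ⟨M, ?_⟩
  intro N G hG R h3 Rc hRc hcard d hd
  obtain ⟨Rd, hRdRc, hRdcard, h2⟩ := hM (colP G d) Rc hcard
  have h3d : RHomog 3 (col3 G) Rd := RHomog.subset h3 (hRdRc.trans hRc)
  have hdRd : d ∉ Rd := fun h => hd (hRdRc h)
  have hcomp1 : ∀ {a b a' b' : Fin N}, a ∈ Rd → b ∈ Rd → a' ∈ Rd → b' ∈ Rd →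
      a < b → a' < b' → ((lbl G d b < lbl G a b) ↔ (lbl G d b' < lbl G a' b')) := by
    intro a b a' b' ha hb ha' hb' hab hab'
    have h := h2 {a, b} (pair_subset ha hb) (card_pair hab)
      {a', b'} (pair_subset ha' hb') (card_pair hab')
    rw [colP_eval G d hab, colP_eval G d hab'] at h
    exact iff_of_eq (congrArg Prod.fst h)
  have hcomp2 : ∀ {a b a' b' : Fin N}, a ∈ Rd → b ∈ Rd → a' ∈ Rd → b' ∈ Rd →
      a < b → a' < b' → ((lbl G d a < lbl G a b) ↔ (lbl G d a' < lbl G a' b')) := by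
    intro a b a' b' ha hb ha' hb' hab hab'
    have h := h2 {a, b} (pair_subset ha hb) (card_pair hab)
      {a', b'} (pair_subset ha' hb') (card_pair hab')
    rw [colP_eval G d hab, colP_eval G d hab'] at h
    exact iff_of_eq (congrArg (fun p : Prop × Prop × Prop => p.2.1) h)
  have hcomp3 : ∀ {a b a' b' : Fin N}, a ∈ Rd → b ∈ Rd → a' ∈ Rd → b' ∈ Rd →
      a < b → a' < b' → ((lbl G d a < lbl G d b) ↔ (lbl G d a' < lbl G d b')) := by
    intro a b a' b' ha hb ha' hb' hab hab'
    have h := h2 {a, b} (pair_subset ha hb) (card_pair hab)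
      {a', b'} (pair_subset ha' hb') (card_pair hab')
    rw [colP_eval G d hab, colP_eval G d hab'] at h
    exact iff_of_eq (congrArg (fun p : Prop × Prop × Prop => p.2.2) h)
  obtain ⟨T, hTRd, hTcard, gapb, gapm, gapa⟩ := spread_chain Rd (P.t - 1) (by omega)
  have hdT : d ∉ T := fun h => hdRd (hTRd h)
  have hScard : (insert d T).card = P.t := by
    rw [Finset.card_insert_of_notMem hdT, hTcard]
    have := P.ht0
    omega
  obtain ⟨ψ, w₀, hψ, hψS, hw₀⟩ := copy_through G P.F hG P.htile (insert d T) hScard d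
    (Finset.mem_insert_self d T)
  have hvune : ψ P.v ≠ ψ P.u := fun h => P.hvu.ne (hψ.1 h)
  have hmemT : ∀ w, ψ w ≠ d → ψ w ∈ T := by
    intro w hw
    rcases Finset.mem_insert.mp (hψS w) with h | h
    · exact absurd h hw
    · exact h
  have hnotmem : ∀ b : Fin N, b ∈ Rd → b ∉ T → ∀ w, ψ w ≠ b := by
    intro b hbRd hbT w h
    rcases Finset.mem_insert.mp (hψS w) with h2 | h2
    · exact hdRd ((h ▸ h2) ▸ hbRd)
    · exact hbT (h ▸ h2)
  have mkX : ∀ b : Fin N, b ∈ Rd → (∀ w, ψ w ≠ b) →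
      lbl G b (ψ P.v) < lbl G (ψ P.v) (ψ P.u) →
      ∃ X : Finset (Fin N), PTf P.F' G X ∧ d ∈ X ∧ X.card = Fintype.card W + 1 ∧
        X.erase d ⊆ Rc := by
    intro b hbRd hbne hlt'
    obtain ⟨X, hX1, hX2, hX3, hX4⟩ := P.pend_PTf G hG hψ hbne hlt'
    refine ⟨X, hX1, (hX4 d).mpr (Or.inr ⟨w₀, hw₀⟩), hX2, ?_⟩
    intro x hx
    rcases (hX4 x).mp (Finset.mem_of_mem_erase hx) with rfl | ⟨w, rfl⟩
    · exact hRdRc hbRd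
    · rcases Finset.mem_insert.mp (hψS w) with h2 | h2
      · exact absurd h2 (Finset.ne_of_mem_erase hx)
      · exact hRdRc (hTRd h2)
  by_cases hyd : ψ P.v = d
  · -- CASE 3 : d is the v-vertex; need b with lbl b d < lbl d (ψ u)
    have hzd : ψ P.u ≠ d := fun h => hvune (hyd.trans h.symm)
    have hzT : ψ P.u ∈ T := hmemT _ hzd
    have hzRd : ψ P.u ∈ Rd := hTRd hzT
    obtain ⟨blo, hbRd, hbT, hbl⟩ := gapb _ hzT
    have hbd : blo ≠ d := fun h => hdRd (h ▸ hbRd)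
    by_cases hQ : lbl G d blo < lbl G d (ψ P.u)
    · refine mkX blo hbRd (hnotmem _ hbRd hbT) ?_
      rw [hyd, lbl_comm G blo d]
      exact hQ
    · obtain ⟨bhi, hb2Rd, hb2T, hb2l⟩ := gapa _ hzT
      have hb2d : bhi ≠ d := fun h => hdRd (h ▸ hb2Rd)
      have hQ2 : ¬ (lbl G d (ψ P.u) < lbl G d bhi) := fun h =>
        hQ ((hcomp3 hbRd hzRd hzRd hb2Rd hbl hb2l).mpr h)
      have hne : lbl G d bhi ≠ lbl G d (ψ P.u) := by
        refine lbl_ne G hG (fun h => hdRd (h ▸ hb2Rd)) (fun h => hdRd (h ▸ hzRd)) ?_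
        exact sym2_ne_left hb2l.ne' (fun h => hdRd (h ▸ hzRd))
      have hQ3 : lbl G d bhi < lbl G d (ψ P.u) := by
        rcases lt_or_gt_of_ne hne with h | h
        · exact h
        · exact absurd h hQ2
      refine mkX bhi hb2Rd (hnotmem _ hb2Rd hb2T) ?_
      rw [hyd, lbl_comm G bhi d]
      exact hQ3
  · by_cases hzd : ψ P.u = d
    · -- CASE 2 : d is the u-vertex; need b with lbl b (ψ v) < lbl (ψ v) d
      have hyT : ψ P.v ∈ T := hmemT _ hyd
      have hyRd : ψ P.v ∈ Rd := hTRd hyT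
      obtain ⟨blo, hbRd, hbT, hbl⟩ := gapb _ hyT
      obtain ⟨bhi, hb2Rd, hb2T, hb2l⟩ := gapa _ hyT
      have hbd : blo ≠ d := fun h => hdRd (h ▸ hbRd)
      have hb2d : bhi ≠ d := fun h => hdRd (h ▸ hb2Rd)
      by_cases hQ1 : lbl G d (ψ P.v) < lbl G blo (ψ P.v)
      · by_cases hQ2 : lbl G d (ψ P.v) < lbl G (ψ P.v) bhi
        · -- fallback : d becomes a pendant of a fresh copy
          have huniv : ∀ a x : Fin N, a ∈ Rd → x ∈ Rd → a ≠ x → lbl G d x < lbl G a x := by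
            intro a x ha hx hax
            rcases lt_or_gt_of_ne hax with h | h
            · exact (hcomp1 ha hx hbRd hyRd h hbl).mpr hQ1
            · have := (hcomp2 hx ha hyRd hb2Rd h hb2l).mpr hQ2
              rwa [lbl_comm G x a] at this
          have hsubcard : P.t ≤ (Rd \ insert d T).card := by
            have h1 := Finset.le_card_sdiff (insert d T) Rd
            omega
          obtain ⟨T', hT'sub, hT'card⟩ := (Rd \ insert d T).exists_subset_card_eq hsubcard
          have hT'Rd : T' ⊆ Rd := hT'sub.trans (Finset.sdiff_subset)
          have hT'ne : T'.Nonempty := by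
            rw [← Finset.card_pos, hT'card]
            exact P.ht0
          obtain ⟨s₀, hs₀⟩ := hT'ne
          obtain ⟨ψ', w₀', hψ', hψ'S, -⟩ := copy_through G P.F hG P.htile T' hT'card s₀ hs₀
          have hvune' : ψ' P.v ≠ ψ' P.u := fun h => P.hvu.ne (hψ'.1 h)
          have hdne : ∀ w, ψ' w ≠ d := fun w h => hdRd (h ▸ hT'Rd (hψ'S w))
          have hlt' : lbl G d (ψ' P.v) < lbl G (ψ' P.v) (ψ' P.u) := by
            rw [lbl_comm G (ψ' P.v) (ψ' P.u)]
            exact huniv (ψ' P.u) (ψ' P.v) (hT'Rd (hψ'S P.u)) (hT'Rd (hψ'S P.v)) hvune'.symm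
          obtain ⟨X, hX1, hX2, hX3, hX4⟩ := P.pend_PTf G hG hψ' hdne hlt'
          refine ⟨X, hX1, (hX4 d).mpr (Or.inl rfl), hX2, ?_⟩
          intro x hx
          rcases (hX4 x).mp (Finset.mem_of_mem_erase hx) with rfl | ⟨w, rfl⟩
          · exact absurd rfl (Finset.ne_of_mem_erase hx)
          · exact hRdRc (hT'Rd (hψ'S w))
        · -- use bhi
          have hne : lbl G (ψ P.v) bhi ≠ lbl G d (ψ P.v) := by
            refine lbl_ne G hG hb2l.ne (fun h => hyd h.symm) ?_
            intro h
            rcases Sym2.eq_iff.mp h with ⟨h2, -⟩ | ⟨-, h3⟩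
            · exact hyd h2
            · exact hb2d h3
          have hQ3 : lbl G (ψ P.v) bhi < lbl G d (ψ P.v) := by
            rcases lt_or_gt_of_ne hne with h | h
            · exact h
            · exact absurd h hQ2
          refine mkX bhi hb2Rd (hnotmem _ hb2Rd hb2T) ?_
          rw [hzd, lbl_comm G bhi (ψ P.v), lbl_comm G (ψ P.v) d]
          exact hQ3
      · -- use blo
        have hne : lbl G blo (ψ P.v) ≠ lbl G d (ψ P.v) := by
          refine lbl_ne G hG hbl.ne (fun h => hyd h.symm) ?_
          exact sym2_ne hbd hbl.ne
        have hQ3 : lbl G blo (ψ P.v) < lbl G d (ψ P.v) := by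
          rcases lt_or_gt_of_ne hne with h | h
          · exact h
          · exact absurd h hQ1
        refine mkX blo hbRd (hnotmem _ hbRd hbT) ?_
        rw [hzd, lbl_comm G (ψ P.v) d]
        exact hQ3
    · -- CASE 1 : d is an inner vertex
      have hyT : ψ P.v ∈ T := hmemT _ hyd
      have hzT : ψ P.u ∈ T := hmemT _ hzd
      obtain ⟨b, hbRd, hbT, hblt⟩ := bsearch G hG h3d hTRd gapb gapm gapa hyT hzT hvune
      refine mkX b hbRd (hnotmem _ hbRd hbT) ?_
      rw [lbl_comm G (ψ P.v) (ψ P.u)]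
      exact hblt

end Part5
section Part6

open EdgeOrderedGraph Finset

variable {W : Type} [Fintype W]

lemma Ctx.tile_blocks (P : Ctx W) {N : ℕ} (G : EdgeOrderedGraph (Fin N))
    {R : Finset (Fin N)} (hblocks : ∀ X ⊆ R, X.card = Fintype.card W + 1 → PTf P.F' G X) :
    ∀ n (Rc : Finset (Fin N)), Rc.card = n → Rc ⊆ R → (Fintype.card W + 1) ∣ n →
      PTf P.F' G Rc := by
  intro n
  induction n using Nat.strong_induction_on with
  | _ n ih =>
    intro Rc hcard hsub hdvd
    rcases Nat.eq_zero_or_pos n with rfl | hpos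
    · rw [Finset.card_eq_zero.mp hcard]
      exact PTf_empty P.F' G
    · have hge : Fintype.card W + 1 ≤ n := Nat.le_of_dvd hpos hdvd
      obtain ⟨X, hXsub, hXcard⟩ := Rc.exists_subset_card_eq
        (show Fintype.card W + 1 ≤ Rc.card by omega)
      have h1 := hblocks X (hXsub.trans hsub) hXcard
      have hcard2 : (Rc \ X).card = n - (Fintype.card W + 1) := by
        rw [Finset.card_sdiff_of_subset hXsub, hcard, hXcard]
      have hdvd2 : (Fintype.card W + 1) ∣ (n - (Fintype.card W + 1)) :=
        Nat.dvd_sub hdvd dvd_rfl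
      have h2 := ih (n - (Fintype.card W + 1)) (by omega) (Rc \ X) hcard2
        ((Finset.sdiff_subset).trans hsub) hdvd2
      have h3 := PTf_union P.F' G (Finset.disjoint_sdiff) h1 h2
      rw [Finset.union_sdiff_of_subset hXsub] at h3
      exact h3

lemma Ctx.absorb (P : Ctx W) :
    ∀ j : ℕ, ∃ B : ℕ, ∀ {N : ℕ} (G : EdgeOrderedGraph (Fin N)), G.graph = ⊤ →
      ∀ {R : Finset (Fin N)}, RHomog 3 (col3 G) R →
      RHomog (Fintype.card W + 1) (colF G (Fintype.card W + 1)) R →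
      2 * P.t + 2 ≤ R.card →
      ∀ Rc J : Finset (Fin N), Rc ⊆ R → J.card = j → Disjoint J Rc →
      B ≤ Rc.card → (Fintype.card W + 1) ∣ (Rc.card + j) →
      PTf P.F' G (J ∪ Rc) := by
  intro j
  induction j with
  | zero =>
    refine ⟨0, ?_⟩
    intro N G hG R h3 hF hRbig Rc J hRc hJ hdisj hcard hdvd
    rw [Finset.card_eq_zero.mp hJ, Finset.empty_union]
    exact P.tile_blocks G (P.blocks G hG h3 hF hRbig) Rc.card Rc rfl hRc (by simpa using hdvd)
  | succ j IH =>
    obtain ⟨Mstep, hstep⟩ := P.absorb_step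
    obtain ⟨Bj, hBj⟩ := IH
    refine ⟨Mstep + Bj + Fintype.card W + 1, ?_⟩
    intro N G hG R h3 hF hRbig Rc J hRc hJ hdisj hcard hdvd
    have hJne : J.Nonempty := by rw [← Finset.card_pos, hJ]; omega
    obtain ⟨d, hd⟩ := hJne
    have hdRc : d ∉ Rc := Finset.disjoint_left.mp hdisj hd
    obtain ⟨X, hX1, hX2, hX3, hX4⟩ := hstep G hG h3 Rc hRc (by omega) d hdRc
    have hXe : (X.erase d).card = Fintype.card W := by
      rw [Finset.card_erase_of_mem hX2, hX3]
      omega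
    set J' := J.erase d with hJ'def
    set Rc' := Rc \ X with hRc'def
    have hRc'eq : Rc' = Rc \ X.erase d := by
      rw [hRc'def]
      ext x
      simp only [Finset.mem_sdiff, Finset.mem_erase]
      constructor
      · rintro ⟨hx1, hx2⟩; exact ⟨hx1, fun h => hx2 h.2⟩
      · rintro ⟨hx1, hx2⟩
        refine ⟨hx1, fun h => ?_⟩
        by_cases hxd : x = d
        · exact hdRc (hxd ▸ hx1)
        · exact hx2 ⟨hxd, h⟩
    have hRc'card : Rc'.card = Rc.card - Fintype.card W := by
      rw [hRc'eq, Finset.card_sdiff_of_subset hX4, hXe]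
    have hJ'card : J'.card = j := by
      rw [hJ'def, Finset.card_erase_of_mem hd, hJ]
      omega
    have hdisj' : Disjoint J' Rc' :=
      hdisj.mono (Finset.erase_subset d J) (Finset.sdiff_subset)
    have hdvd' : (Fintype.card W + 1) ∣ (Rc'.card + j) := by
      have hfW : Fintype.card W ≤ Rc.card := by omega
      have h5 := Nat.dvd_sub hdvd (dvd_refl (Fintype.card W + 1))
      rwa [show Rc.card + (j + 1) - (Fintype.card W + 1) = Rc'.card + j by omega] at h5
    have h2 := hBj G hG h3 hF hRbig Rc' J' ((Finset.sdiff_subset).trans hRc)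
      hJ'card hdisj' (by omega) hdvd'
    have hdisj2 : Disjoint X (J' ∪ Rc') := by
      rw [Finset.disjoint_union_right]
      constructor
      · rw [Finset.disjoint_left]
        intro x hxX hxJ'
        have hxd := (Finset.mem_erase.mp hxJ').1
        have hxJ := Finset.mem_of_mem_erase hxJ'
        have hxRc : x ∈ Rc := hX4 (Finset.mem_erase.mpr ⟨hxd, hxX⟩)
        exact Finset.disjoint_left.mp hdisj hxJ hxRc
      · rw [Finset.disjoint_right]
        intro x hxRc' hxX
        exact (Finset.mem_sdiff.mp hxRc').2 hxX
    have hunion : J ∪ Rc = X ∪ (J' ∪ Rc') := by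
      ext x
      simp only [Finset.mem_union, Finset.mem_erase, Finset.mem_sdiff, hJ'def, hRc'def]
      constructor
      · rintro (hx | hx)
        · by_cases hxd : x = d
          · exact Or.inl (hxd ▸ hX2)
          · exact Or.inr (Or.inl ⟨hxd, hx⟩)
        · by_cases hxX : x ∈ X
          · exact Or.inl hxX
          · exact Or.inr (Or.inr ⟨hx, hxX⟩)
      · rintro (hx | ⟨-, hx⟩ | ⟨hx, -⟩)
        · by_cases hxd : x = d
          · exact Or.inl (hxd ▸ hd)
          · exact Or.inr (hX4 (Finset.mem_erase.mpr ⟨hxd, hx⟩))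
        · exact Or.inl hx
        · exact Or.inr hx
    rw [hunion]
    exact PTf_union P.F' G hdisj2 hX1 h2

end Part6
section Part7

open EdgeOrderedGraph Finset

variable {W : Type} [Fintype W] {N : ℕ}

lemma greedy_S (G : EdgeOrderedGraph (Fin N)) (hG : G.graph = ⊤) (Pl : Finset (Fin N))
    (t : ℕ) (hP : 12 * t + 12 ≤ Pl.card) :
    ∃ (S : Finset (Fin N)) (nn : Fin N → Fin N), S ⊆ Pl ∧ S.card = t ∧
      (∀ y ∈ Pl, nn y ∈ Pl ∧ nn y ≠ y ∧
        ∀ z ∈ Pl, z ≠ y → z ≠ nn y → lbl G y (nn y) < lbl G y z) ∧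
      (∀ s ∈ S, nn s ∉ S) := by
  classical
  -- the nearest-neighbour function
  have hnnex : ∀ y, ∃ b : Fin N, y ∈ Pl → (b ∈ Pl.erase y ∧
      ∀ z ∈ Pl.erase y, lbl G y b ≤ lbl G y z) := by
    intro y
    by_cases hy : y ∈ Pl
    · have hne : (Pl.erase y).Nonempty := by
        rw [← Finset.card_pos, Finset.card_erase_of_mem hy]
        omega
      obtain ⟨b, hb1, hb2⟩ := (Pl.erase y).exists_min_image (lbl G y) hne
      exact ⟨b, fun _ => ⟨hb1, hb2⟩⟩
    · exact ⟨y, fun h => absurd h hy⟩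
  choose nn hnn using hnnex
  have hnnP : ∀ y ∈ Pl, nn y ∈ Pl ∧ nn y ≠ y ∧
      ∀ z ∈ Pl, z ≠ y → z ≠ nn y → lbl G y (nn y) < lbl G y z := by
    intro y hy
    obtain ⟨h1, h2⟩ := hnn y hy
    have hnny : nn y ≠ y := Finset.ne_of_mem_erase h1
    refine ⟨Finset.mem_of_mem_erase h1, hnny, ?_⟩
    intro z hz hzy hznn
    refine lt_of_le_of_ne (h2 z (Finset.mem_erase.mpr ⟨hzy, hz⟩)) ?_
    exact lbl_ne G hG hnny.symm (Ne.symm hzy) (sym2_ne_left (Ne.symm hznn) (Ne.symm hzy))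
  -- reverse degree control
  set rev : Fin N → Finset (Fin N) := fun y => Pl.filter (fun z => nn z = y) with hrev
  have hsum : ∑ y ∈ Pl, (rev y).card = Pl.card := by
    rw [hrev]
    exact (Finset.card_eq_sum_card_fiberwise (fun z hz => (hnnP z hz).1)).symm
  set bad := Pl.filter (fun y => 3 ≤ (rev y).card) with hbad
  have hbadcard : 3 * bad.card ≤ Pl.card := by
    calc 3 * bad.card = ∑ _y ∈ bad, 3 := by rw [Finset.sum_const, smul_eq_mul, mul_comm]
    _ ≤ ∑ y ∈ bad, (rev y).card :=
        Finset.sum_le_sum (fun y hy => (Finset.mem_filter.mp hy).2)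
    _ ≤ ∑ y ∈ Pl, (rev y).card :=
        Finset.sum_le_sum_of_subset (Finset.filter_subset _ _)
    _ = Pl.card := hsum
  set P₀ := Pl \ bad with hP₀
  have hP₀card : 4 * t + 1 ≤ P₀.card := by
    have h1 : P₀.card = Pl.card - bad.card := Finset.card_sdiff_of_subset (Finset.filter_subset _ _)
    omega
  have hP₀rev : ∀ y ∈ P₀, (rev y).card ≤ 2 := by
    intro y hy
    obtain ⟨hy1, hy2⟩ := Finset.mem_sdiff.mp hy
    by_contra hc
    exact hy2 (Finset.mem_filter.mpr ⟨hy1, by omega⟩)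
  -- greedy construction
  have hstep : ∀ k, k ≤ t → ∃ S : Finset (Fin N), S ⊆ P₀ ∧ S.card = k ∧
      ∀ s ∈ S, ∀ s' ∈ S, nn s ≠ s' := by
    intro k
    induction k with
    | zero => exact fun _ => ⟨∅, Finset.empty_subset _, Finset.card_empty, by simp⟩
    | succ k ih =>
      intro hk
      obtain ⟨S, hS1, hS2, hS3⟩ := ih (by omega)
      set Bad := S ∪ S.image nn ∪ S.biUnion rev with hBad
      have hBadcard : Bad.card ≤ 4 * k := by
        calc Bad.card ≤ (S ∪ S.image nn).card + (S.biUnion rev).card := Finset.card_union_le _ _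
        _ ≤ (S.card + (S.image nn).card) + (S.biUnion rev).card := by
            have := Finset.card_union_le S (S.image nn)
            omega
        _ ≤ (k + k) + (S.biUnion rev).card := by
            have h1 := Finset.card_image_le (f := nn) (s := S)
            omega
        _ ≤ (k + k) + ∑ s ∈ S, (rev s).card := by
            have := Finset.card_biUnion_le (s := S) (t := rev)
            omega
        _ ≤ (k + k) + 2 * k := by
            have h2 : ∑ s ∈ S, (rev s).card ≤ ∑ _s ∈ S, 2 :=
              Finset.sum_le_sum (fun s hs => hP₀rev s (hS1 hs))
            rw [Finset.sum_const, smul_eq_mul] at h2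
            omega
        _ = 4 * k := by ring
      have hne : (P₀ \ Bad).Nonempty := by
        rw [← Finset.card_pos]
        have := Finset.le_card_sdiff Bad P₀
        omega
      obtain ⟨x, hx⟩ := hne
      obtain ⟨hxP₀, hxBad⟩ := Finset.mem_sdiff.mp hx
      have hxP : x ∈ Pl := (Finset.sdiff_subset) hxP₀
      refine ⟨insert x S, ?_, ?_, ?_⟩
      · intro a ha
        rcases Finset.mem_insert.mp ha with rfl | ha
        · exact hxP₀
        · exact hS1 ha
      · rw [Finset.card_insert_of_notMem
          (fun h => hxBad (Finset.mem_union_left _ (Finset.mem_union_left _ h))), hS2]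
      · intro s hs s' hs'
        rcases Finset.mem_insert.mp hs with hsx | hs0
        · rcases Finset.mem_insert.mp hs' with hs'x | hs'0
          · subst hsx; subst hs'x
            exact (hnnP _ hxP).2.1
          · subst hsx
            intro h
            exact hxBad (Finset.mem_union_right _ (Finset.mem_biUnion.mpr
              ⟨s', hs'0, Finset.mem_filter.mpr ⟨hxP, h⟩⟩))
        · rcases Finset.mem_insert.mp hs' with hs'x | hs'0
          · subst hs'x
            intro h
            exact hxBad (Finset.mem_union_left _ (Finset.mem_union_right _
              (Finset.mem_image.mpr ⟨s, hs0, h⟩)))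
          · exact hS3 s hs0 s' hs'0
  obtain ⟨S, hS1, hS2, hS3⟩ := hstep t le_rfl
  exact ⟨S, nn, hS1.trans (Finset.sdiff_subset), hS2, hnnP,
    fun s hs h => hS3 s hs (nn s) h rfl⟩

lemma Ctx.round (P : Ctx W) (G : EdgeOrderedGraph (Fin N)) (hG : G.graph = ⊤)
    (Pl : Finset (Fin N)) (hPl : 12 * P.t + 12 ≤ Pl.card) :
    ∃ X, X ⊆ Pl ∧ X.card = Fintype.card W + 1 ∧ PTf P.F' G X := by
  obtain ⟨S, nn, hSPl, hScard, hnnP, hnnS⟩ := greedy_S G hG Pl P.t hPl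
  have hSne : S.Nonempty := by rw [← Finset.card_pos, hScard]; exact P.ht0
  obtain ⟨s₀, hs₀⟩ := hSne
  obtain ⟨ψ, w₀, hψ, hψS, -⟩ := copy_through G P.F hG P.htile S hScard s₀ hs₀
  have hvune : ψ P.v ≠ ψ P.u := fun h => P.hvu.ne (hψ.1 h)
  have hyPl : ψ P.v ∈ Pl := hSPl (hψS P.v)
  set b := nn (ψ P.v) with hbdef
  have hbS : b ∉ S := hnnS _ (hψS P.v)
  have hbne : ∀ w, ψ w ≠ b := fun w h => hbS (h ▸ hψS w)
  obtain ⟨hbPl, hbney, hbmin⟩ := hnnP _ hyPl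
  have hlt : lbl G b (ψ P.v) < lbl G (ψ P.v) (ψ P.u) := by
    rw [lbl_comm G b (ψ P.v)]
    exact hbmin (ψ P.u) (hSPl (hψS P.u)) hvune.symm
      (fun h => hbS (by rw [hbdef, ← h]; exact hψS P.u))
  obtain ⟨X, hX1, hX2, hX3, hX4⟩ := P.pend_PTf G hG hψ hbne hlt
  refine ⟨X, ?_, hX2, hX1⟩
  intro x hx
  rcases (hX4 x).mp hx with rfl | ⟨w, rfl⟩
  · exact hbPl
  · exact hSPl (hψS w)

lemma Ctx.rounds (P : Ctx W) (G : EdgeOrderedGraph (Fin N)) (hG : G.graph = ⊤) :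
    ∀ n (Pl : Finset (Fin N)), Pl.card = n → (Fintype.card W + 1) ∣ n →
      ∃ J, J ⊆ Pl ∧ J.card ≤ 12 * P.t + 12 ∧ (Fintype.card W + 1) ∣ J.card ∧
        PTf P.F' G (Pl \ J) := by
  intro n
  induction n using Nat.strong_induction_on with
  | _ n ih =>
    intro Pl hcard hdvd
    by_cases hsmall : n ≤ 12 * P.t + 12
    · refine ⟨Pl, le_refl _, by omega, hcard ▸ hdvd, ?_⟩
      rw [Finset.sdiff_self]
      exact PTf_empty P.F' G
    · obtain ⟨X, hXPl, hXcard, hXPT⟩ := P.round G hG Pl (by omega)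
      have hdvd2 : (Fintype.card W + 1) ∣ (n - (Fintype.card W + 1)) :=
        Nat.dvd_sub hdvd dvd_rfl
      have hcard2 : (Pl \ X).card = n - (Fintype.card W + 1) := by
        rw [Finset.card_sdiff_of_subset hXPl, hcard, hXcard]
      obtain ⟨J, hJ1, hJ2, hJ3, hJ4⟩ := ih (n - (Fintype.card W + 1))
        (by omega) (Pl \ X) hcard2 hdvd2
      refine ⟨J, hJ1.trans (Finset.sdiff_subset), hJ2, hJ3, ?_⟩
      have hXJ : Disjoint X J := by
        rw [Finset.disjoint_right]
        intro x hxJ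
        exact (Finset.mem_sdiff.mp (hJ1 hxJ)).2
      have hunion : Pl \ J = X ∪ ((Pl \ X) \ J) := by
        ext x
        simp only [Finset.mem_sdiff, Finset.mem_union]
        constructor
        · rintro ⟨hx1, hx2⟩
          by_cases hxX : x ∈ X
          · exact Or.inl hxX
          · exact Or.inr ⟨⟨hx1, hxX⟩, hx2⟩
        · rintro (hx | ⟨⟨hx1, -⟩, hx2⟩)
          · exact ⟨hXPl hx, Finset.disjoint_left.mp hXJ hx⟩
          · exact ⟨hx1, hx2⟩
      rw [hunion]
      refine PTf_union P.F' G ?_ hXPT hJ4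
      rw [Finset.disjoint_right]
      intro x hx
      exact (Finset.mem_sdiff.mp (Finset.mem_sdiff.mp hx).1).2
end Part7
/-- **Adding a small pendant edge preserves tileability.** If `F` is tileable, `v` is
incident to the smallest edge `vu` of `F`, and `F'` is obtained from `F` by adding a new
vertex (`none`) joined to `v` by an edge smaller than all edges of `F`, then `F'` is
tileable. -/
theorem add_pendant_edge_tileable {W : Type} [Fintype W] (F : EdgeOrderedGraph W)
    (v u : W) (hvu : F.graph.Adj v u)
    (hsmallest : ∀ e ∈ F.graph.edgeSet, F.label s(v, u) ≤ F.label e)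
    (hTil : Tileable F)
    (F' : EdgeOrderedGraph (Option W))
    (hadj : ∀ a b : W, F'.graph.Adj (some a) (some b) ↔ F.graph.Adj a b)
    (hpend : ∀ w : W, F'.graph.Adj none (some w) ↔ w = v)
    (horder : ∀ a b c d : W, F.graph.Adj a b → F.graph.Adj c d →
      (F'.label s(some a, some b) < F'.label s(some c, some d) ↔
        F.label s(a, b) < F.label s(c, d)))
    (hnew : ∀ a b : W, F.graph.Adj a b →
      F'.label s(none, some v) < F'.label s(some a, some b)) :
    Tileable F' := by
  classical
  obtain ⟨t, ht0, htf, htile⟩ := hTil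
  set P : Ctx W := ⟨F, v, u, F', t, hvu, hsmallest, hadj, hpend, horder, hnew, ht0, htf, htile⟩
    with hPdef
  set f := Fintype.card W with hf
  -- absorption bounds
  choose Bfun hBfun using P.absorb
  set Bmax := (Finset.range (12 * t + 13)).sup Bfun with hBmax
  set L := (f + 1) * (Bmax + 2 * t + 3) with hL
  have hLB : Bmax + 2 * t + 3 ≤ L := Nat.le_mul_of_pos_left _ (by omega)
  -- Ramsey bounds
  obtain ⟨M₂, hM₂⟩ := my_ramsey (C := Prop × Prop) 3 L
  obtain ⟨M₁, hM₁⟩ :=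
    my_ramsey (C := Fin (f + 1) → Fin (f + 1) → Fin (f + 1) → Fin (f + 1) → Prop) (f + 1) M₂
  set N := (f + 1) * (M₁ + L + 1) with hN
  have hNpos : 0 < N := Nat.mul_pos (by omega) (by omega)
  refine ⟨N, hNpos, ?_, ?_⟩
  · rw [Fintype.card_option, ← hf]
    exact ⟨M₁ + L + 1, rfl⟩
  · intro G hG
    have huniv : (Finset.univ : Finset (Fin N)).card = N := by
      rw [Finset.card_univ, Fintype.card_fin]
    have hM₁N : M₁ ≤ (Finset.univ : Finset (Fin N)).card := by
      rw [huniv, hN]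
      calc M₁ ≤ M₁ + L + 1 := by omega
      _ ≤ (f + 1) * (M₁ + L + 1) := Nat.le_mul_of_pos_left _ (by omega)
    obtain ⟨R₁, hR₁sub, hR₁card, hR₁hom⟩ := hM₁ (colF G (f + 1)) Finset.univ hM₁N
    obtain ⟨R₂, hR₂sub, hR₂card, hR₂hom⟩ := hM₂ (col3 G) R₁ hR₁card
    obtain ⟨R, hRsub, hRcard⟩ := R₂.exists_subset_card_eq hR₂card
    have h3 : RHomog 3 (col3 G) R := RHomog.subset hR₂hom hRsub
    have hFhom : RHomog (f + 1) (colF G (f + 1)) R :=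
      RHomog.subset hR₁hom (hRsub.trans hR₂sub)
    have hRbig : 2 * t + 2 ≤ R.card := by rw [hRcard]; omega
    set pool := Finset.univ \ R with hpool
    have hpoolcard : pool.card = N - L := by
      rw [hpool, Finset.card_sdiff_of_subset (Finset.subset_univ R), huniv, hRcard]
    have hdvdpool : (f + 1) ∣ pool.card := by
      rw [hpoolcard, hN, hL]
      exact Nat.dvd_sub ⟨M₁ + L + 1, rfl⟩ ⟨Bmax + 2 * t + 3, rfl⟩
    obtain ⟨J, hJsub, hJle, hJdvd, hJPT⟩ := P.rounds G hG pool.card pool rfl hdvdpool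
    -- absorb the junk into R
    have hdisjJR : Disjoint J R := by
      rw [Finset.disjoint_left]
      intro x hxJ hxR
      exact (Finset.mem_sdiff.mp (hJsub hxJ)).2 hxR
    have hJle' : J.card ≤ 12 * t + 12 := hJle
    have hBle : Bfun J.card ≤ R.card := by
      rw [hRcard]
      calc Bfun J.card ≤ Bmax := Finset.le_sup (Finset.mem_range.mpr (by omega))
      _ ≤ L := le_trans (by omega) hLB
    have hdvdJR : (f + 1) ∣ (R.card + J.card) := by
      rw [hRcard]
      exact Nat.dvd_add ⟨Bmax + 2 * t + 3, rfl⟩ hJdvd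
    have habs := hBfun J.card G hG h3 hFhom hRbig R J (le_refl R) rfl hdisjJR hBle hdvdJR
    -- glue everything
    have hdisj2 : Disjoint (pool \ J) (J ∪ R) := by
      rw [Finset.disjoint_union_right]
      constructor
      · rw [Finset.disjoint_right]
        intro x hx
        exact fun h => (Finset.mem_sdiff.mp h).2 hx
      · rw [Finset.disjoint_right]
        intro x hxR hxpj
        have hxpool : x ∈ pool := (Finset.mem_sdiff.mp hxpj).1
        rw [hpool] at hxpool
        exact (Finset.mem_sdiff.mp hxpool).2 hxR
    have hfinal := PTf_union P.F' G hdisj2 hJPT habs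
    have huniveq : (pool \ J) ∪ (J ∪ R) = Finset.univ := by
      apply Finset.eq_univ_of_forall
      intro x
      rw [Finset.mem_union, Finset.mem_union]
      by_cases hxR : x ∈ R
      · exact Or.inr (Or.inr hxR)
      · by_cases hxJ : x ∈ J
        · exact Or.inr (Or.inl hxJ)
        · refine Or.inl (Finset.mem_sdiff.mpr ⟨?_, hxJ⟩)
          rw [hpool]
          exact Finset.mem_sdiff.mpr ⟨Finset.mem_univ x, hxR⟩
    rw [huniveq] at hfinal
    have : HasPerfectTilingOn P.F' G ↑(Finset.univ : Finset (Fin N)) := hfinal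
    rw [Finset.coe_univ] at this
    exact this
end

section
/- For every n ≥ 4: let D_n⁺ be the edge-ordered graph obtained from D_n by adding a new vertex w and the edge u_n w, placed larger than all edges of D_n, and let D_n⁻ be the edge-ordered graph obtained from D_n by adding a new vertex u and the edge u₁u, placed smaller than all edges of D_n. Then neither D_n⁺ nor D_n⁻ is tileable. -/
open EdgeOrderedGraph

/-- Reference labeling for the edge-ordered graph `D_n` (on `0`-indexed vertices:
`u₁ = 0`, `u_n = n-1`): edge `u₁u_j` gets label `j-1`, edge `u_iu_n` (for `1 < i < n`)
gets label `n-1+(i-1)`, realizing `u₁u₂ < … < u₁u_n < u₂u_n < … < u_{n-1}u_n`. -/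
noncomputable def dnLabel (n : ℕ) (a b : ℕ) : ℝ :=
  if a = 0 ∨ b = 0 then ((max a b : ℕ) : ℝ) else (n : ℝ) - 1 + ((min a b : ℕ) : ℝ)

/-- `G` is (an isomorphic copy in standard position of) the edge-ordered graph `D_n`. -/
def IsDn (n : ℕ) (G : EdgeOrderedGraph (Fin n)) : Prop :=
  (∀ a b : Fin n, G.graph.Adj a b ↔
    (a ≠ b ∧ (a.val = 0 ∨ b.val = 0 ∨ a.val = n - 1 ∨ b.val = n - 1))) ∧
  ∀ a b c d : Fin n, G.graph.Adj a b → G.graph.Adj c d →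
    (G.label s(a, b) < G.label s(c, d) ↔ dnLabel n a.val b.val < dnLabel n c.val d.val)

/-- Reference labeling for `D_n⁺`: on `Fin (n+1)` the vertex `n` is the new vertex `w`,
adjacent only to `u_n = n-1`, and `dnLabel n (n-1) n = 2n-2` exceeds every label of `D_n`. -/
noncomputable def dnPlusLabel (n : ℕ) (a b : ℕ) : ℝ := dnLabel n a b

/-- Reference labeling for `D_n⁻`: on `Fin (n+1)` the vertex `n` is the new vertex `u`,
adjacent only to `u₁ = 0`, and its edge gets label `0`, below every label of `D_n`. -/
noncomputable def dnMinusLabel (n : ℕ) (a b : ℕ) : ℝ :=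
  if a = n ∨ b = n then 0 else dnLabel n a b

/-- `G` is (an isomorphic copy in standard position of) `D_n⁺`: `D_n` together with a new
vertex `w` joined to `u_n` by an edge larger than all edges of `D_n`. -/
def IsDnPlus (n : ℕ) (G : EdgeOrderedGraph (Fin (n + 1))) : Prop :=
  (∀ a b : Fin (n + 1), G.graph.Adj a b ↔
    (a ≠ b ∧ ((a.val < n ∧ b.val < n ∧
        (a.val = 0 ∨ b.val = 0 ∨ a.val = n - 1 ∨ b.val = n - 1)) ∨
      (a.val = n - 1 ∧ b.val = n) ∨ (a.val = n ∧ b.val = n - 1)))) ∧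
  ∀ a b c d : Fin (n + 1), G.graph.Adj a b → G.graph.Adj c d →
    (G.label s(a, b) < G.label s(c, d) ↔ dnPlusLabel n a.val b.val < dnPlusLabel n c.val d.val)

/-- `G` is (an isomorphic copy in standard position of) `D_n⁻`: `D_n` together with a new
vertex `u` joined to `u₁` by an edge smaller than all edges of `D_n`. -/
def IsDnMinus (n : ℕ) (G : EdgeOrderedGraph (Fin (n + 1))) : Prop :=
  (∀ a b : Fin (n + 1), G.graph.Adj a b ↔
    (a ≠ b ∧ ((a.val < n ∧ b.val < n ∧
        (a.val = 0 ∨ b.val = 0 ∨ a.val = n - 1 ∨ b.val = n - 1)) ∨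
      (a.val = 0 ∧ b.val = n) ∨ (a.val = n ∧ b.val = 0)))) ∧
  ∀ a b c d : Fin (n + 1), G.graph.Adj a b → G.graph.Adj c d →
    (G.label s(a, b) < G.label s(c, d) ↔ dnMinusLabel n a.val b.val < dnMinusLabel n c.val d.val)


section NotTileableAux

/-- Colex-style key on pairs of naturals. -/
def ckey (a b : ℕ) : ℕ := max a b * max a b + min a b

lemma ckey_comm (a b : ℕ) : ckey a b = ckey b a := by
  unfold ckey; rw [max_comm, min_comm]

lemma ckey_pos {a b : ℕ} (h : a ≠ b) : 0 < ckey a b := by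
  unfold ckey
  have h1 : 0 < max a b := by omega
  exact Nat.lt_of_lt_of_le (Nat.mul_pos h1 h1) (Nat.le_add_right _ _)

lemma ckey_lt_ckey {c x y : ℕ} (h : x < y) : ckey c x < ckey c y := by
  unfold ckey
  rcases le_total x c with h1 | h1 <;> rcases le_total y c with h2 | h2
  · rw [max_eq_left h1, max_eq_left h2, min_eq_right h1, min_eq_right h2]; omega
  · rw [max_eq_left h1, min_eq_right h1, max_eq_right h2, min_eq_left h2]
    rcases Nat.eq_or_lt_of_le h2 with rfl | h3
    · exact Nat.add_lt_add_left h _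
    · have h5 : (c + 1) * (c + 1) ≤ y * y := Nat.mul_le_mul h3 h3
      nlinarith
  · exact absurd h (by omega)
  · rw [max_eq_right h1, max_eq_right h2, min_eq_left h1, min_eq_left h2]
    have h5 : (x + 1) * (x + 1) ≤ y * y := Nat.mul_le_mul h h
    nlinarith

lemma ckey_lt_iff {c x y : ℕ} : ckey c x < ckey c y ↔ x < y := by
  constructor
  · intro h
    by_contra h'
    push_neg at h'
    rcases Nat.eq_or_lt_of_le h' with h2 | h2
    · rw [h2] at h; exact lt_irrefl _ h
    · exact absurd h (not_lt.mpr (le_of_lt (ckey_lt_ckey h2)))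
  · exact ckey_lt_ckey

lemma ckey_lt_iff' {c x y : ℕ} : ckey x c < ckey y c ↔ x < y := by
  rw [ckey_comm x c, ckey_comm y c]; exact ckey_lt_iff

lemma ckey_inj {a b c d : ℕ} (h : ckey a b = ckey c d) :
    max a b = max c d ∧ min a b = min c d := by
  have h1 : min a b ≤ max a b := min_le_max
  have h2 : min c d ≤ max c d := min_le_max
  unfold ckey at h
  have h3 : max a b = max c d := by
    rcases lt_trichotomy (max a b) (max c d) with hlt | he | hlt
    · have h4 : (max a b + 1) * (max a b + 1) ≤ max c d * max c d :=
        Nat.mul_le_mul hlt hlt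
      have h5 : max a b * max a b + 2 * max a b + 1 ≤ max c d * max c d := by
        calc max a b * max a b + 2 * max a b + 1
            = (max a b + 1) * (max a b + 1) := by ring
          _ ≤ max c d * max c d := h4
      linarith [Nat.zero_le (min a b), Nat.zero_le (min c d)]
    · exact he
    · have h4 : (max c d + 1) * (max c d + 1) ≤ max a b * max a b :=
        Nat.mul_le_mul hlt hlt
      have h5 : max c d * max c d + 2 * max c d + 1 ≤ max a b * max a b := by
        calc max c d * max c d + 2 * max c d + 1
            = (max c d + 1) * (max c d + 1) := by ring
          _ ≤ max a b * max a b := h4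
      linarith [Nat.zero_le (min a b), Nat.zero_le (min c d)]
  refine ⟨h3, ?_⟩
  rw [h3] at h
  exact Nat.add_left_cancel h

/-- The bad edge-ordering of `K_t` for `D_n⁺`: colex ordering, except that all edges at
vertex `0` are placed below everything else with reversed star order. -/
noncomputable def plusG (t : ℕ) : EdgeOrderedGraph (Fin t) where
  graph := ⊤
  label := Sym2.lift ⟨fun a b =>
      if a.val = 0 ∨ b.val = 0 then -((ckey a.val b.val : ℕ) : ℝ)
      else ((ckey a.val b.val : ℕ) : ℝ),
    fun a b => by
      dsimp only
      rw [ckey_comm a.val b.val]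
      exact if_congr or_comm rfl rfl⟩
  inj := by
    intro e₁ h₁ e₂ h₂ heq
    induction e₁ using Sym2.ind with
    | _ a b =>
    induction e₂ using Sym2.ind with
    | _ c d =>
    rw [SimpleGraph.mem_edgeSet, SimpleGraph.top_adj] at h₁ h₂
    simp only [Sym2.lift_mk] at heq
    have hab : a.val ≠ b.val := fun hv => h₁ (Fin.ext hv)
    have hcd : c.val ≠ d.val := fun hv => h₂ (Fin.ext hv)
    have hk : ckey a.val b.val = ckey c.val d.val := by
      have p1 : (0 : ℝ) < ((ckey a.val b.val : ℕ) : ℝ) := by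
        exact_mod_cast ckey_pos hab
      have p2 : (0 : ℝ) < ((ckey c.val d.val : ℕ) : ℝ) := by
        exact_mod_cast ckey_pos hcd
      split_ifs at heq
      · exact_mod_cast neg_inj.mp heq
      · exfalso; linarith
      · exfalso; linarith
      · exact_mod_cast heq
    obtain ⟨hmax, hmin⟩ := ckey_inj hk
    have hv : (a.val = c.val ∧ b.val = d.val) ∨ (a.val = d.val ∧ b.val = c.val) := by
      omega
    rw [Sym2.eq_iff]
    rcases hv with ⟨x, y⟩ | ⟨x, y⟩
    · exact Or.inl ⟨Fin.ext x, Fin.ext y⟩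
    · exact Or.inr ⟨Fin.ext x, Fin.ext y⟩

/-- The bad edge-ordering for `D_n⁻`: the reverse of `plusG`. -/
noncomputable def minusG (t : ℕ) : EdgeOrderedGraph (Fin t) where
  graph := ⊤
  label := fun e => -((plusG t).label e)
  inj := fun e₁ h₁ e₂ h₂ h => (plusG t).inj e₁ h₁ e₂ h₂ (neg_inj.mp h)

lemma plusG_label (t : ℕ) (x y : Fin t) :
    (plusG t).label s(x, y) =
      if x.val = 0 ∨ y.val = 0 then -((ckey x.val y.val : ℕ) : ℝ)
      else ((ckey x.val y.val : ℕ) : ℝ) := rfl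

lemma minusG_label (t : ℕ) (x y : Fin t) :
    (minusG t).label s(x, y) = -((plusG t).label s(x, y)) := rfl

lemma plusG_label_zero_left {t : ℕ} {x y : Fin t} (hx : x.val = 0) :
    (plusG t).label s(x, y) = -((ckey 0 y.val : ℕ) : ℝ) := by
  rw [plusG_label, if_pos (Or.inl hx), hx]

lemma plusG_label_zero_right {t : ℕ} {x y : Fin t} (hy : y.val = 0) :
    (plusG t).label s(x, y) = -((ckey 0 x.val : ℕ) : ℝ) := by
  rw [plusG_label, if_pos (Or.inr hy), hy, ckey_comm]

lemma plusG_label_pos {t : ℕ} {x y : Fin t} (hx : x.val ≠ 0) (hy : y.val ≠ 0) :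
    (plusG t).label s(x, y) = ((ckey x.val y.val : ℕ) : ℝ) := by
  rw [plusG_label, if_neg (by tauto)]

lemma not_pos_lt_neg {a b c d : ℕ} (h : c ≠ d) :
    ¬ (((ckey a b : ℕ) : ℝ) < -((ckey c d : ℕ) : ℝ)) := by
  have h1 : (0 : ℝ) ≤ ((ckey a b : ℕ) : ℝ) := Nat.cast_nonneg _
  have h2 : (0 : ℝ) < ((ckey c d : ℕ) : ℝ) := by exact_mod_cast ckey_pos h
  intro hlt; linarith

lemma dnl_pos {n a b : ℕ} (ha : a ≠ 0) (hb : b ≠ 0) :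
    dnLabel n a b = (n : ℝ) - 1 + ((min a b : ℕ) : ℝ) := by
  rw [dnLabel, if_neg (by tauto)]

lemma dnl_zero {n b : ℕ} : dnLabel n 0 b = ((b : ℕ) : ℝ) := by
  rw [dnLabel, if_pos (Or.inl rfl)]
  norm_num

/-- No copy of `D_n⁺` inside `plusG t` covers the vertex `0`. -/
lemma plus_no_z {n t : ℕ} (hn : 4 ≤ n) (ht : 0 < t)
    (F : EdgeOrderedGraph (Fin (n + 1))) (hF : IsDnPlus n F)
    (φ : Fin (n + 1) → Fin t) (hφ : IsCopy F (plusG t) φ) (i : Fin (n + 1)) :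
    φ i ≠ ⟨0, ht⟩ := by
  obtain ⟨hinj, hadj, hord⟩ := hφ
  intro h
  have e0 : (0 : ℕ) < n + 1 := by omega
  have e1 : (1 : ℕ) < n + 1 := by omega
  have e2 : (2 : ℕ) < n + 1 := by omega
  have eN1 : n - 1 < n + 1 := by omega
  have eN : n < n + 1 := by omega
  have hval : ∀ x : Fin (n + 1), x.val ≠ i.val → (φ x).val ≠ 0 := by
    intro x hx hv
    exact hx (congrArg Fin.val (hinj (by rw [h]; exact Fin.ext hv)))
  have key : ∀ (a b c d : Fin (n + 1)), F.graph.Adj a b → F.graph.Adj c d →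
      dnPlusLabel n a.val b.val < dnPlusLabel n c.val d.val →
      (plusG t).label s(φ a, φ b) < (plusG t).label s(φ c, φ d) :=
    fun a b c d h1 h2 h3 => hord a b c d h1 h2 ((hF.2 a b c d h1 h2).mpr h3)
  have adj01 : F.graph.Adj ⟨0, e0⟩ ⟨1, e1⟩ :=
    (hF.1 _ _).mpr ⟨Fin.ne_of_val_ne (show (0 : ℕ) ≠ 1 by omega),
      Or.inl ⟨show (0 : ℕ) < n by omega, show (1 : ℕ) < n by omega, Or.inl rfl⟩⟩
  have adj02 : F.graph.Adj ⟨0, e0⟩ ⟨2, e2⟩ :=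
    (hF.1 _ _).mpr ⟨Fin.ne_of_val_ne (show (0 : ℕ) ≠ 2 by omega),
      Or.inl ⟨show (0 : ℕ) < n by omega, show (2 : ℕ) < n by omega, Or.inl rfl⟩⟩
  have adj1N1 : F.graph.Adj ⟨1, e1⟩ ⟨n - 1, eN1⟩ :=
    (hF.1 _ _).mpr ⟨Fin.ne_of_val_ne (show (1 : ℕ) ≠ n - 1 by omega),
      Or.inl ⟨show (1 : ℕ) < n by omega, show n - 1 < n by omega,
        Or.inr (Or.inr (Or.inr rfl))⟩⟩
  have adj2N1 : F.graph.Adj ⟨2, e2⟩ ⟨n - 1, eN1⟩ :=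
    (hF.1 _ _).mpr ⟨Fin.ne_of_val_ne (show (2 : ℕ) ≠ n - 1 by omega),
      Or.inl ⟨show (2 : ℕ) < n by omega, show n - 1 < n by omega,
        Or.inr (Or.inr (Or.inr rfl))⟩⟩
  have adj0N1 : F.graph.Adj ⟨0, e0⟩ ⟨n - 1, eN1⟩ :=
    (hF.1 _ _).mpr ⟨Fin.ne_of_val_ne (show (0 : ℕ) ≠ n - 1 by omega),
      Or.inl ⟨show (0 : ℕ) < n by omega, show n - 1 < n by omega, Or.inl rfl⟩⟩
  have adjN1N : F.graph.Adj ⟨n - 1, eN1⟩ ⟨n, eN⟩ :=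
    (hF.1 _ _).mpr ⟨Fin.ne_of_val_ne (show n - 1 ≠ n by omega),
      Or.inr (Or.inl ⟨rfl, rfl⟩)⟩
  have num1 : dnPlusLabel n 0 1 < dnPlusLabel n 0 2 := by
    simp only [dnPlusLabel]
    rw [dnl_zero, dnl_zero]; norm_num
  have num2 : dnPlusLabel n 1 (n - 1) < dnPlusLabel n 2 (n - 1) := by
    simp only [dnPlusLabel]
    rw [dnl_pos (by omega) (by omega), dnl_pos (by omega) (by omega),
      min_eq_left (by omega : (1:ℕ) ≤ n - 1), min_eq_left (by omega : (2:ℕ) ≤ n - 1)]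
    push_cast
    linarith
  have num4 : dnPlusLabel n 1 (n - 1) < dnPlusLabel n (n - 1) n := by
    simp only [dnPlusLabel]
    rw [dnl_pos (by omega) (by omega), dnl_pos (by omega) (by omega),
      min_eq_left (by omega : (1:ℕ) ≤ n - 1), min_eq_left (by omega : n - 1 ≤ n)]
    have h3 : (3 : ℝ) ≤ ((n - 1 : ℕ) : ℝ) := by exact_mod_cast (by omega : 3 ≤ n - 1)
    push_cast
    linarith
  by_cases h0 : i.val = 0
  · have hi : i = ⟨0, e0⟩ := Fin.ext h0
    rw [hi] at h
    have hz : (φ ⟨0, e0⟩).val = 0 := by rw [h]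
    have z1 : (φ ⟨1, e1⟩).val ≠ 0 := hval ⟨1, e1⟩ (show (1:ℕ) ≠ i.val by omega)
    have z2 : (φ ⟨2, e2⟩).val ≠ 0 := hval ⟨2, e2⟩ (show (2:ℕ) ≠ i.val by omega)
    have zN1 : (φ ⟨n - 1, eN1⟩).val ≠ 0 := hval ⟨n - 1, eN1⟩ (show n - 1 ≠ i.val by omega)
    have hK1 := key _ _ _ _ adj01 adj02 num1
    have hK2 := key _ _ _ _ adj1N1 adj2N1 num2
    rw [plusG_label_zero_left hz, plusG_label_zero_left hz] at hK1
    have m1 : (φ ⟨2, e2⟩).val < (φ ⟨1, e1⟩).val :=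
      ckey_lt_iff.mp (by exact_mod_cast neg_lt_neg_iff.mp hK1)
    rw [plusG_label_pos z1 zN1, plusG_label_pos z2 zN1] at hK2
    have m2 : (φ ⟨1, e1⟩).val < (φ ⟨2, e2⟩).val :=
      ckey_lt_iff'.mp (by exact_mod_cast hK2)
    omega
  · by_cases hNN : i.val = n
    · have hi : i = ⟨n, eN⟩ := Fin.ext hNN
      rw [hi] at h
      have hz : (φ ⟨n, eN⟩).val = 0 := by rw [h]
      have z1 : (φ ⟨1, e1⟩).val ≠ 0 := hval ⟨1, e1⟩ (show (1:ℕ) ≠ i.val by omega)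
      have zN1 : (φ ⟨n - 1, eN1⟩).val ≠ 0 := hval ⟨n - 1, eN1⟩ (show n - 1 ≠ i.val by omega)
      have hK := key _ _ _ _ adj1N1 adjN1N num4
      rw [plusG_label_pos z1 zN1, plusG_label_zero_right hz] at hK
      exact not_pos_lt_neg (Ne.symm zN1) hK
    · by_cases hN1 : i.val = n - 1
      · have hi : i = ⟨n - 1, eN1⟩ := Fin.ext hN1
        rw [hi] at h
        have hz : (φ ⟨n - 1, eN1⟩).val = 0 := by rw [h]
        have z0 : (φ ⟨0, e0⟩).val ≠ 0 := hval ⟨0, e0⟩ (show (0:ℕ) ≠ i.val by omega)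
        have z1 : (φ ⟨1, e1⟩).val ≠ 0 := hval ⟨1, e1⟩ (show (1:ℕ) ≠ i.val by omega)
        have z2 : (φ ⟨2, e2⟩).val ≠ 0 := hval ⟨2, e2⟩ (show (2:ℕ) ≠ i.val by omega)
        have hK1 := key _ _ _ _ adj1N1 adj2N1 num2
        have hK2 := key _ _ _ _ adj01 adj02 num1
        rw [plusG_label_zero_right hz, plusG_label_zero_right hz] at hK1
        have m1 : (φ ⟨2, e2⟩).val < (φ ⟨1, e1⟩).val :=
          ckey_lt_iff.mp (by exact_mod_cast neg_lt_neg_iff.mp hK1)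
        rw [plusG_label_pos z0 z1, plusG_label_pos z0 z2] at hK2
        have m2 : (φ ⟨1, e1⟩).val < (φ ⟨2, e2⟩).val :=
          ckey_lt_iff.mp (by exact_mod_cast hK2)
        omega
      · have hb1 : 1 ≤ i.val := by omega
        have hb2 : i.val ≤ n - 2 := by have := i.isLt; omega
        have hz : (φ i).val = 0 := by rw [h]
        have z0 : (φ ⟨0, e0⟩).val ≠ 0 := hval ⟨0, e0⟩ (show (0:ℕ) ≠ i.val by omega)
        have zN1 : (φ ⟨n - 1, eN1⟩).val ≠ 0 := hval ⟨n - 1, eN1⟩ (show n - 1 ≠ i.val by omega)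
        have adjiN1 : F.graph.Adj i ⟨n - 1, eN1⟩ :=
          (hF.1 _ _).mpr ⟨Fin.ne_of_val_ne (show i.val ≠ n - 1 by omega),
            Or.inl ⟨by omega, show n - 1 < n by omega,
              Or.inr (Or.inr (Or.inr rfl))⟩⟩
        have num3 : dnPlusLabel n 0 (n - 1) < dnPlusLabel n i.val (n - 1) := by
          simp only [dnPlusLabel]
          rw [dnl_zero, dnl_pos (by omega) (by omega),
            min_eq_left (by omega : i.val ≤ n - 1)]
          have hc1 : ((n - 1 : ℕ) : ℝ) = (n : ℝ) - 1 := by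
            rw [Nat.cast_sub (by omega), Nat.cast_one]
          have hc2 : (1 : ℝ) ≤ (i.val : ℝ) := by exact_mod_cast hb1
          rw [hc1]; linarith
        have hK := key _ _ _ _ adj0N1 adjiN1 num3
        rw [plusG_label_pos z0 zN1, plusG_label_zero_left hz] at hK
        exact not_pos_lt_neg (Ne.symm zN1) hK

/-- No copy of `D_n⁻` inside `minusG t` covers the vertex `0`. -/
lemma minus_no_z {n t : ℕ} (hn : 4 ≤ n) (ht : 0 < t)
    (F : EdgeOrderedGraph (Fin (n + 1))) (hF : IsDnMinus n F)
    (φ : Fin (n + 1) → Fin t) (hφ : IsCopy F (minusG t) φ) (i : Fin (n + 1)) :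
    φ i ≠ ⟨0, ht⟩ := by
  obtain ⟨hinj, hadj, hord⟩ := hφ
  intro h
  have e0 : (0 : ℕ) < n + 1 := by omega
  have e1 : (1 : ℕ) < n + 1 := by omega
  have e2 : (2 : ℕ) < n + 1 := by omega
  have eN1 : n - 1 < n + 1 := by omega
  have eN : n < n + 1 := by omega
  have hval : ∀ x : Fin (n + 1), x.val ≠ i.val → (φ x).val ≠ 0 := by
    intro x hx hv
    exact hx (congrArg Fin.val (hinj (by rw [h]; exact Fin.ext hv)))
  have key : ∀ (a b c d : Fin (n + 1)), F.graph.Adj a b → F.graph.Adj c d →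
      dnMinusLabel n a.val b.val < dnMinusLabel n c.val d.val →
      (plusG t).label s(φ c, φ d) < (plusG t).label s(φ a, φ b) := by
    intro a b c d h1 h2 h3
    have h4 := hord a b c d h1 h2 ((hF.2 a b c d h1 h2).mpr h3)
    rw [minusG_label, minusG_label] at h4
    exact neg_lt_neg_iff.mp h4
  have adj01 : F.graph.Adj ⟨0, e0⟩ ⟨1, e1⟩ :=
    (hF.1 _ _).mpr ⟨Fin.ne_of_val_ne (show (0 : ℕ) ≠ 1 by omega),
      Or.inl ⟨show (0 : ℕ) < n by omega, show (1 : ℕ) < n by omega, Or.inl rfl⟩⟩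
  have adj02 : F.graph.Adj ⟨0, e0⟩ ⟨2, e2⟩ :=
    (hF.1 _ _).mpr ⟨Fin.ne_of_val_ne (show (0 : ℕ) ≠ 2 by omega),
      Or.inl ⟨show (0 : ℕ) < n by omega, show (2 : ℕ) < n by omega, Or.inl rfl⟩⟩
  have adj1N1 : F.graph.Adj ⟨1, e1⟩ ⟨n - 1, eN1⟩ :=
    (hF.1 _ _).mpr ⟨Fin.ne_of_val_ne (show (1 : ℕ) ≠ n - 1 by omega),
      Or.inl ⟨show (1 : ℕ) < n by omega, show n - 1 < n by omega,
        Or.inr (Or.inr (Or.inr rfl))⟩⟩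
  have adj2N1 : F.graph.Adj ⟨2, e2⟩ ⟨n - 1, eN1⟩ :=
    (hF.1 _ _).mpr ⟨Fin.ne_of_val_ne (show (2 : ℕ) ≠ n - 1 by omega),
      Or.inl ⟨show (2 : ℕ) < n by omega, show n - 1 < n by omega,
        Or.inr (Or.inr (Or.inr rfl))⟩⟩
  have adj0N1 : F.graph.Adj ⟨0, e0⟩ ⟨n - 1, eN1⟩ :=
    (hF.1 _ _).mpr ⟨Fin.ne_of_val_ne (show (0 : ℕ) ≠ n - 1 by omega),
      Or.inl ⟨show (0 : ℕ) < n by omega, show n - 1 < n by omega, Or.inl rfl⟩⟩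
  have adj0N : F.graph.Adj ⟨0, e0⟩ ⟨n, eN⟩ :=
    (hF.1 _ _).mpr ⟨Fin.ne_of_val_ne (show (0 : ℕ) ≠ n by omega),
      Or.inr (Or.inl ⟨rfl, rfl⟩)⟩
  have num1 : dnMinusLabel n 0 1 < dnMinusLabel n 0 2 := by
    have a1 : dnMinusLabel n 0 1 = 1 := by
      have hno : ¬ ((0:ℕ) = n ∨ (1:ℕ) = n) := by omega
      simp [dnMinusLabel, hno, dnLabel]
    have a2 : dnMinusLabel n 0 2 = 2 := by
      have hno : ¬ ((0:ℕ) = n ∨ (2:ℕ) = n) := by omega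
      simp [dnMinusLabel, hno, dnLabel]
    rw [a1, a2]; norm_num
  have num2 : dnMinusLabel n 1 (n - 1) < dnMinusLabel n 2 (n - 1) := by
    have a1 : dnMinusLabel n 1 (n - 1) = dnLabel n 1 (n - 1) := by
      have hno : ¬ ((1:ℕ) = n ∨ n - 1 = n) := by omega
      simp [dnMinusLabel, hno]
    have a2 : dnMinusLabel n 2 (n - 1) = dnLabel n 2 (n - 1) := by
      have hno : ¬ ((2:ℕ) = n ∨ n - 1 = n) := by omega
      simp [dnMinusLabel, hno]
    rw [a1, a2, dnl_pos (by omega) (by omega), dnl_pos (by omega) (by omega),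
      min_eq_left (by omega : (1:ℕ) ≤ n - 1), min_eq_left (by omega : (2:ℕ) ≤ n - 1)]
    push_cast
    linarith
  have num3 : dnMinusLabel n 0 n < dnMinusLabel n 0 1 := by
    have a1 : dnMinusLabel n 0 n = 0 := by simp [dnMinusLabel]
    have a2 : dnMinusLabel n 0 1 = 1 := by
      have hno : ¬ ((0:ℕ) = n ∨ (1:ℕ) = n) := by omega
      simp [dnMinusLabel, hno, dnLabel]
    rw [a1, a2]; norm_num
  by_cases h0 : i.val = 0
  · have hi : i = ⟨0, e0⟩ := Fin.ext h0
    rw [hi] at h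
    have hz : (φ ⟨0, e0⟩).val = 0 := by rw [h]
    have z1 : (φ ⟨1, e1⟩).val ≠ 0 := hval ⟨1, e1⟩ (show (1:ℕ) ≠ i.val by omega)
    have z2 : (φ ⟨2, e2⟩).val ≠ 0 := hval ⟨2, e2⟩ (show (2:ℕ) ≠ i.val by omega)
    have zN1 : (φ ⟨n - 1, eN1⟩).val ≠ 0 := hval ⟨n - 1, eN1⟩ (show n - 1 ≠ i.val by omega)
    have hK1 := key _ _ _ _ adj01 adj02 num1
    have hK2 := key _ _ _ _ adj1N1 adj2N1 num2
    rw [plusG_label_zero_left hz, plusG_label_zero_left hz] at hK1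
    have m1 : (φ ⟨1, e1⟩).val < (φ ⟨2, e2⟩).val :=
      ckey_lt_iff.mp (by exact_mod_cast neg_lt_neg_iff.mp hK1)
    rw [plusG_label_pos z1 zN1, plusG_label_pos z2 zN1] at hK2
    have m2 : (φ ⟨2, e2⟩).val < (φ ⟨1, e1⟩).val :=
      ckey_lt_iff'.mp (by exact_mod_cast hK2)
    omega
  · by_cases hNN : i.val = n
    · have hi : i = ⟨n, eN⟩ := Fin.ext hNN
      rw [hi] at h
      have hz : (φ ⟨n, eN⟩).val = 0 := by rw [h]
      have z0 : (φ ⟨0, e0⟩).val ≠ 0 := hval ⟨0, e0⟩ (show (0:ℕ) ≠ i.val by omega)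
      have z1 : (φ ⟨1, e1⟩).val ≠ 0 := hval ⟨1, e1⟩ (show (1:ℕ) ≠ i.val by omega)
      have hK := key _ _ _ _ adj0N adj01 num3
      rw [plusG_label_zero_right hz, plusG_label_pos z0 z1] at hK
      exact not_pos_lt_neg (Ne.symm z0) hK
    · by_cases hN1 : i.val = n - 1
      · have hi : i = ⟨n - 1, eN1⟩ := Fin.ext hN1
        rw [hi] at h
        have hz : (φ ⟨n - 1, eN1⟩).val = 0 := by rw [h]
        have z0 : (φ ⟨0, e0⟩).val ≠ 0 := hval ⟨0, e0⟩ (show (0:ℕ) ≠ i.val by omega)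
        have z1 : (φ ⟨1, e1⟩).val ≠ 0 := hval ⟨1, e1⟩ (show (1:ℕ) ≠ i.val by omega)
        have z2 : (φ ⟨2, e2⟩).val ≠ 0 := hval ⟨2, e2⟩ (show (2:ℕ) ≠ i.val by omega)
        have hK1 := key _ _ _ _ adj1N1 adj2N1 num2
        have hK2 := key _ _ _ _ adj01 adj02 num1
        rw [plusG_label_zero_right hz, plusG_label_zero_right hz] at hK1
        have m1 : (φ ⟨1, e1⟩).val < (φ ⟨2, e2⟩).val :=
          ckey_lt_iff.mp (by exact_mod_cast neg_lt_neg_iff.mp hK1)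
        rw [plusG_label_pos z0 z1, plusG_label_pos z0 z2] at hK2
        have m2 : (φ ⟨2, e2⟩).val < (φ ⟨1, e1⟩).val :=
          ckey_lt_iff.mp (by exact_mod_cast hK2)
        omega
      · have hb1 : 1 ≤ i.val := by omega
        have hb2 : i.val ≤ n - 2 := by have := i.isLt; omega
        have hz : (φ i).val = 0 := by rw [h]
        have z0 : (φ ⟨0, e0⟩).val ≠ 0 := hval ⟨0, e0⟩ (show (0:ℕ) ≠ i.val by omega)
        have zN1 : (φ ⟨n - 1, eN1⟩).val ≠ 0 := hval ⟨n - 1, eN1⟩ (show n - 1 ≠ i.val by omega)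
        have adj0i : F.graph.Adj ⟨0, e0⟩ i :=
          (hF.1 _ _).mpr ⟨Fin.ne_of_val_ne (show (0:ℕ) ≠ i.val by omega),
            Or.inl ⟨show (0 : ℕ) < n by omega, by omega, Or.inl rfl⟩⟩
        have num4 : dnMinusLabel n 0 i.val < dnMinusLabel n 0 (n - 1) := by
          have a1 : dnMinusLabel n 0 i.val = dnLabel n 0 i.val := by
            have hno : ¬ ((0:ℕ) = n ∨ i.val = n) := by omega
            simp [dnMinusLabel, hno]
          have a2 : dnMinusLabel n 0 (n - 1) = dnLabel n 0 (n - 1) := by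
            have hno : ¬ ((0:ℕ) = n ∨ n - 1 = n) := by omega
            simp [dnMinusLabel, hno]
          rw [a1, a2, dnl_zero, dnl_zero]
          exact_mod_cast (by omega : i.val < n - 1)
        have hK := key _ _ _ _ adj0i adj0N1 num4
        rw [plusG_label_zero_right hz, plusG_label_pos z0 zN1] at hK
        exact not_pos_lt_neg (Ne.symm z0) hK

end NotTileableAux

/-- **Neither `D_n⁺` nor `D_n⁻` is tileable**, for every `n ≥ 4`. -/
theorem DnPlus_DnMinus_not_tileable (n : ℕ) (hn : 4 ≤ n) :
    (∀ G : EdgeOrderedGraph (Fin (n + 1)), IsDnPlus n G → ¬ Tileable G) ∧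
    (∀ G : EdgeOrderedGraph (Fin (n + 1)), IsDnMinus n G → ¬ Tileable G) := by
  constructor
  · intro F hF hTile
    obtain ⟨t, ht, -, hall⟩ := hTile
    obtain ⟨T, hT1, -, hT3⟩ := hall (plusG t) rfl
    obtain ⟨p, hp, -⟩ := hT3 ⟨0, ht⟩ (Set.mem_univ _)
    exact plus_no_z hn ht F hF p.1 (hT1 p.1 hp.1) p.2 hp.2
  · intro F hF hTile
    obtain ⟨t, ht, -, hall⟩ := hTile
    obtain ⟨T, hT1, -, hT3⟩ := hall (minusG t) rfl
    obtain ⟨p, hp, -⟩ := hT3 ⟨0, ht⟩ (Set.mem_univ _)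
    exact minus_no_z hn ht F hF p.1 (hT1 p.1 hp.1) p.2 hp.2
end

section
/- For every even n ≥ 4, the monotone cycle of length n is not Turánable. -/
open EdgeOrderedGraph

/-- Reference labeling of the monotone cycle on `0`-indexed vertices `0, …, n-1`:
edge `{i, i+1}` gets label `i` and the closing edge `{n-1, 0}` gets label `n-1`. -/
noncomputable def cycLabel (n : ℕ) (a b : ℕ) : ℝ :=
  if min a b = 0 ∧ max a b = n - 1 then (n : ℝ) - 1 else ((min a b : ℕ) : ℝ)

/-- `G` is (an isomorphic copy in standard position of) the monotone cycle of length `n`: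
the cycle `u₁ … u_n` with edge order `u₁u₂ < u₂u₃ < … < u_{n-1}u_n < u_nu₁`. -/
def IsMonotoneCycle (n : ℕ) (G : EdgeOrderedGraph (Fin n)) : Prop :=
  (∀ a b : Fin n, G.graph.Adj a b ↔
    (a ≠ b ∧ ((a.val + 1) % n = b.val ∨ (b.val + 1) % n = a.val))) ∧
  ∀ a b c d : Fin n, G.graph.Adj a b → G.graph.Adj c d →
    (G.label s(a, b) < G.label s(c, d) ↔ cycLabel n a.val b.val < cycLabel n c.val d.val)

/-!
Order the edges of `K_t` by the sum of their endpoints, breaking ties arbitrarily. If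
`u₁ u₂ … u_n` is a monotone cycle in this ordering, each comparison `u_i u_{i+1} < u_{i+1} u_{i+2}`
forces `u_i ≤ u_{i+2}`, and the closing comparison `u_{n-1} u_n < u_n u₁` forces `u_{n-1} ≤ u₁`.
For even `n` these chain to `u₁ ≤ u₃ ≤ ⋯ ≤ u_{n-1} ≤ u₁`, so `u₁ = u₃`, which is impossible.
-/

lemma Nat.le_of_mul_add_le_mul_add {x y r s t : ℕ} (hs : s < t) (h : x * t + r ≤ y * t + s) :
    x ≤ y := by
  by_contra! hxy
  have : (y + 1) * t ≤ x * t := Nat.mul_le_mul_right t hxy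
  nlinarith

lemma Nat.add_one_mod_eq_ite {k n : ℕ} (hk : k < n) :
    (k + 1) % n = if k + 1 = n then 0 else k + 1 := by
  split_ifs with h
  · rw [h, Nat.mod_self]
  · exact Nat.mod_eq_of_lt (by omega)

lemma Nat.add_one_mod_ne_mod {k n : ℕ} (hn : 2 ≤ n) : (k + 1) % n ≠ k % n := by
  rw [← Nat.mod_add_mod, Nat.add_one_mod_eq_ite (Nat.mod_lt k (by omega))]
  split_ifs <;> omega

lemma le_apply_add_two_mul {α : Type*} [Preorder α] {f : ℕ → α} {n : ℕ}
    (hf : ∀ k, k + 1 < n → f k ≤ f (k + 2)) :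
    ∀ i j, j + 2 * i ≤ n → f j ≤ f (j + 2 * i)
  | 0, _, _ => le_rfl
  | i + 1, j, h => (hf j (by omega)).trans <| by
      simpa only [Nat.mul_succ, Nat.add_assoc, Nat.add_comm 2] using
        le_apply_add_two_mul hf i (j + 2) (by omega)

/-- Encodes the pair (sum of the endpoints, smaller endpoint), ordered lexicographically. -/
def sumLabel (t : ℕ) : Sym2 (Fin t) → ℕ :=
  Sym2.lift ⟨fun a b => (a.val + b.val) * t + min a.val b.val,
    fun a b => by dsimp only; rw [Nat.add_comm a.val, Nat.min_comm]⟩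

lemma Fin.min_val_lt {t : ℕ} (a b : Fin t) : min a.val b.val < t :=
  (min_le_left _ _).trans_lt a.isLt

lemma add_le_add_of_sumLabel_le {t : ℕ} {a b c d : Fin t}
    (h : sumLabel t s(a, b) ≤ sumLabel t s(c, d)) : a.val + b.val ≤ c.val + d.val :=
  Nat.le_of_mul_add_le_mul_add (Fin.min_val_lt c d) h

lemma sumLabel_injective (t : ℕ) : Function.Injective (sumLabel t) := by
  intro e₁ e₂ h
  induction e₁ using Sym2.ind with | _ a b => ?_
  induction e₂ using Sym2.ind with | _ c d => ?_
  have hsum : a.val + b.val = c.val + d.val :=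
    (add_le_add_of_sumLabel_le h.le).antisymm (add_le_add_of_sumLabel_le h.ge)
  have hmin : min a.val b.val = min c.val d.val := by
    simp only [sumLabel, Sym2.lift_mk, hsum] at h
    exact Nat.add_left_cancel h
  simp only [Sym2.eq_iff, Fin.ext_iff]
  omega

noncomputable def sumOrdering (t : ℕ) : EdgeOrderedGraph (Fin t) where
  graph := ⊤
  label e := sumLabel t e
  inj _ _ _ _ h := sumLabel_injective t (Nat.cast_injective h)

lemma add_le_add_of_sumOrdering_label_lt {t : ℕ} {a b c d : Fin t}
    (h : (sumOrdering t).label s(a, b) < (sumOrdering t).label s(c, d)) :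
    a.val + b.val ≤ c.val + d.val :=
  add_le_add_of_sumLabel_le (Nat.cast_lt.mp h).le

lemma cycLabel_add_one_mod {n k : ℕ} (hn : 3 ≤ n) (hk : k < n) :
    cycLabel n k ((k + 1) % n) = k := by
  rw [Nat.add_one_mod_eq_ite hk, cycLabel]
  split_ifs with hlast hwrap hwrap
  · have : (n : ℝ) = k + 1 := by exact_mod_cast hlast.symm
    linarith
  · omega
  · omega
  · simp

namespace IsMonotoneCycle

variable {n : ℕ} [NeZero n] {G : EdgeOrderedGraph (Fin n)}

lemma adj_ofNat_add_one (hG : IsMonotoneCycle n G) (hn : 2 ≤ n) (k : ℕ) :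
    G.graph.Adj (Fin.ofNat n k) (Fin.ofNat n (k + 1)) := by
  rw [hG.1]
  simpa [Fin.ext_iff] using (Nat.add_one_mod_ne_mod hn).symm

lemma label_lt_label_add_one (hG : IsMonotoneCycle n G) (hn : 3 ≤ n) {k : ℕ} (hk : k + 1 < n) :
    G.label s(Fin.ofNat n k, Fin.ofNat n (k + 1)) <
      G.label s(Fin.ofNat n (k + 1), Fin.ofNat n (k + 2)) := by
  rw [hG.2 _ _ _ _ (hG.adj_ofNat_add_one (by omega) k) (hG.adj_ofNat_add_one (by omega) (k + 1))]
  simp only [Fin.val_ofNat, Nat.mod_eq_of_lt (by omega : k < n)]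
  rw [cycLabel_add_one_mod hn (by omega), Nat.mod_eq_of_lt hk, show k + 2 = k + 1 + 1 from rfl,
    cycLabel_add_one_mod hn hk]
  exact_mod_cast k.lt_succ_self

end IsMonotoneCycle

/-- **Monotone cycles of even length are not Turánable.** -/
theorem monotone_even_cycle_not_turanable (n : ℕ) (hn : 4 ≤ n) (heven : Even n)
    (G : EdgeOrderedGraph (Fin n)) (hG : IsMonotoneCycle n G) : ¬ Turanable G := by
  rintro ⟨t, ht⟩
  obtain ⟨φ, hφ_inj, -, hφ_lt⟩ := ht (sumOrdering t) rfl
  have : NeZero n := ⟨by omega⟩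
  have hstep (k : ℕ) (hk : k + 1 < n) :
      (φ (Fin.ofNat n k)).val ≤ (φ (Fin.ofNat n (k + 2))).val := by
    have := add_le_add_of_sumOrdering_label_lt <|
      hφ_lt (Fin.ofNat n k) (Fin.ofNat n (k + 1)) (Fin.ofNat n (k + 1)) (Fin.ofNat n (k + 2))
        (hG.adj_ofNat_add_one (by omega) k) (hG.adj_ofNat_add_one (by omega) (k + 1))
        (hG.label_lt_label_add_one (by omega) hk)
    omega
  obtain ⟨m, hm⟩ := heven
  have hwrap : Fin.ofNat n (2 + 2 * (m - 1)) = Fin.ofNat n 0 :=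
    Fin.ext (by simp [show 2 + 2 * (m - 1) = n by omega])
  have h02 := hstep 0 (by omega)
  have h20 :=
    le_apply_add_two_mul (f := fun k => (φ (Fin.ofNat n k)).val) hstep (m - 1) 2 (by omega)
  rw [hwrap] at h20
  have h := hφ_inj (Fin.ext (h02.antisymm h20))
  simp [Fin.ext_iff, Nat.mod_eq_of_lt (by omega : 2 < n)] at h
end
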